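/- arXiv:0911.2663 — 7 statements merged into one kernel-verified Lean document; each statement's English description precedes it below -/
import Mathlib

section
/- Let D ⊆ ℂ be a domain and f a holomorphic function on D with f′(z) ≠ 0 for all z ∈ D. Then for every integer n ≥ 3 and every z ∈ D, Tamanoi's Schwarzian derivatives satisfy the recursion S_n[f](z) = (S_{n−1}[f])′(z) + (1/2) S_2[f](z) · Σ_{k=1}^{n−1} C(n,k) S_{k−1}[f](z) S_{n−k−1}[f](z), where C(n,k) denotes the binomial coefficient. -/
/-!
Write `𝒮f = f‴/f′ − (3/2)(f″/f′)²` for the classical Schwarzian. A direct computation shows that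
`V(z, w) = N_z(f(z + w))` solves the Riccati equation `∂_w V = 1 + ∂_z V + (1/2) 𝒮f(z) V²`.
Differentiating it `n` times in `w` at `w = 0`, commuting `∂_z` with `∂_wⁿ` (symmetry of second
derivatives of the analytic function `V`) and expanding `∂_wⁿ (V²)` by Leibniz's rule gives
`S_n = S_{n-1}′ + (1/2) 𝒮f · Σ_k C(n,k) S_{k-1} S_{n-k-1}`, where the terms `k = 0, n` drop out
because `V(z, 0) = 0`. The same equation at low orders gives `S_0 = 1`, then `S_1 = 0`, and then
`S_2 = 𝒮f`, which turns the coefficient into `S_2`.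
-/

/-- The Möbius-normalized function `V(z,w) = N_z(f(z+w))` used by Tamanoi:
`N_z(t) = f'(z)(t - f(z)) / ((1/2) f''(z)(t - f(z)) + f'(z)^2)`. -/
noncomputable def tamanoiV (f : ℂ → ℂ) (z w : ℂ) : ℂ :=
  deriv f z * (f (z + w) - f z) /
    ((1 / 2) * iteratedDeriv 2 f z * (f (z + w) - f z) + (deriv f z) ^ 2)

/-- Tamanoi's Schwarzian derivative of virtual order `n`:
`S_n[f](z) = (∂/∂w)^{n+1} V(z,w) |_{w=0}`. -/
noncomputable def tamanoiS (f : ℂ → ℂ) (n : ℕ) (z : ℂ) : ℂ :=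
  iteratedDeriv (n + 1) (tamanoiV f z) 0

open Topology Filter Finset Function

section Slices

variable {𝕜 E : Type*} [NontriviallyNormedField 𝕜] [NormedAddCommGroup E] [NormedSpace 𝕜 E]
  {z w : 𝕜}

lemma DifferentiableAt.hasDerivAt_slice_left {F : 𝕜 × 𝕜 → E} (hF : DifferentiableAt 𝕜 F (z, w)) :
    HasDerivAt (fun t => F (t, w)) (fderiv 𝕜 F (z, w) (1, 0)) z :=
  hF.hasFDerivAt.comp_hasDerivAt z ((hasDerivAt_id z).prodMk (hasDerivAt_const z w))

lemma DifferentiableAt.hasDerivAt_slice_right {F : 𝕜 × 𝕜 → E} (hF : DifferentiableAt 𝕜 F (z, w)) :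
    HasDerivAt (fun s => F (z, s)) (fderiv 𝕜 F (z, w) (0, 1)) w :=
  hF.hasFDerivAt.comp_hasDerivAt w ((hasDerivAt_const w z).prodMk (hasDerivAt_id w))

variable [CompleteSpace E] {G : 𝕜 → 𝕜 → E}

lemma analyticAt_iteratedDeriv {f : 𝕜 → E} {x : 𝕜}
    (hf : AnalyticAt 𝕜 f x) (n : ℕ) : AnalyticAt 𝕜 (iteratedDeriv n f) x := by
  rw [iteratedDeriv_eq_iterate]
  exact hf.iterated_deriv n

lemma hasDerivAt_iteratedDeriv_of_analyticAt {f : 𝕜 → E} {x : 𝕜}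
    (hf : AnalyticAt 𝕜 f x) (n : ℕ) :
    HasDerivAt (iteratedDeriv n f) (iteratedDeriv (n + 1) f x) x := by
  rw [iteratedDeriv_succ]
  exact (analyticAt_iteratedDeriv hf n).differentiableAt.hasDerivAt

lemma AnalyticAt.eventually_analyticAt_and_deriv_ne_zero {f : 𝕜 → E} {x : 𝕜}
    (hf : AnalyticAt 𝕜 f x) (hf' : deriv f x ≠ 0) :
    ∀ᶠ y in 𝓝 x, AnalyticAt 𝕜 f y ∧ deriv f y ≠ 0 :=
  hf.eventually_analyticAt.and (hf.deriv.continuousAt.eventually_ne hf')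

lemma AnalyticAt.eventually_deriv_left_eq (hG : AnalyticAt 𝕜 (uncurry G) (z, w)) :
    ∀ᶠ q in 𝓝 (z, w), deriv (fun t => G t q.2) q.1 = fderiv 𝕜 (uncurry G) q (1, 0) :=
  hG.eventually_analyticAt.mono fun _ hq => hq.differentiableAt.hasDerivAt_slice_left.deriv

lemma AnalyticAt.eventually_deriv_right_eq (hG : AnalyticAt 𝕜 (uncurry G) (z, w)) :
    ∀ᶠ q in 𝓝 (z, w), deriv (G q.1) q.2 = fderiv 𝕜 (uncurry G) q (0, 1) :=
  hG.eventually_analyticAt.mono fun _ hq => hq.differentiableAt.hasDerivAt_slice_right.deriv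

lemma AnalyticAt.fderiv_apply {F : Type*} [NormedAddCommGroup F] [NormedSpace 𝕜 F] {g : F → E}
    {x : F} (hg : AnalyticAt 𝕜 g x) (v : F) : AnalyticAt 𝕜 (fun y => fderiv 𝕜 g y v) x :=
  ((ContinuousLinearMap.apply 𝕜 E v).analyticAt _).comp hg.fderiv

lemma AnalyticAt.uncurry_deriv_right (hG : AnalyticAt 𝕜 (uncurry G) (z, w)) :
    AnalyticAt 𝕜 (uncurry fun t => deriv (G t)) (z, w) :=
  (hG.fderiv_apply (0, 1)).congr (hG.eventually_deriv_right_eq.mono fun _ hq => hq.symm)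

lemma AnalyticAt.analyticAt_deriv_left (hG : AnalyticAt 𝕜 (uncurry G) (z, w)) :
    AnalyticAt 𝕜 (fun s => deriv (fun t => G t s) z) w := by
  refine ((hG.fderiv_apply (1, 0)).comp_of_eq (by fun_prop) rfl).congr ?_
  exact ((Continuous.prodMk_right z).tendsto w |>.eventually hG.eventually_deriv_left_eq).mono
    fun _ hs => hs.symm

lemma AnalyticAt.deriv_deriv_comm (hG : AnalyticAt 𝕜 (uncurry G) (z, w)) :
    deriv (fun t => deriv (G t) w) z = deriv (fun s => deriv (fun t => G t s) z) w := by
  have hleft : (fun s => deriv (fun t => G t s) z) =ᶠ[𝓝 w]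
      fun s => fderiv 𝕜 (uncurry G) (z, s) (1, 0) :=
    (Continuous.prodMk_right z).tendsto w |>.eventually hG.eventually_deriv_left_eq
  have hright : (fun t => deriv (G t) w) =ᶠ[𝓝 z]
      fun t => fderiv 𝕜 (uncurry G) (t, w) (0, 1) :=
    (Continuous.prodMk_left w).tendsto z |>.eventually hG.eventually_deriv_right_eq
  have happly (v : 𝕜 × 𝕜) : HasFDerivAt (fun q => fderiv 𝕜 (uncurry G) q v)
      ((fderiv 𝕜 (fderiv 𝕜 (uncurry G)) (z, w)).flip v) (z, w) :=
    hG.fderiv.differentiableAt.hasFDerivAt.clm_apply (hasFDerivAt_const v _) |>.congr_fderiv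
      (by ext <;> simp)
  rw [hleft.deriv_eq, hright.deriv_eq, (happly _).differentiableAt.hasDerivAt_slice_left.deriv,
    (happly _).differentiableAt.hasDerivAt_slice_right.deriv, (happly _).fderiv,
    (happly _).fderiv]
  exact hG.contDiffAt.isSymmSndFDerivAt_of_omega (1, 0) (0, 1)

lemma AnalyticAt.deriv_iteratedDeriv_comm (hG : AnalyticAt 𝕜 (uncurry G) (z, w)) (n : ℕ) :
    deriv (fun t => iteratedDeriv n (G t) w) z =
      iteratedDeriv n (fun s => deriv (fun t => G t s) z) w := by
  induction n generalizing G w with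
  | zero => simp only [iteratedDeriv_zero]
  | succ n ih =>
    have hcomm : (fun s => deriv (fun t => deriv (G t) s) z) =ᶠ[𝓝 w]
        deriv (fun s => deriv (fun t => G t s) z) :=
      ((Continuous.prodMk_right z).tendsto w |>.eventually hG.eventually_analyticAt).mono
        fun _ hs => hs.deriv_deriv_comm
    simp only [iteratedDeriv_succ']
    rw [ih hG.uncurry_deriv_right, hcomm.iteratedDeriv_eq]

end Slices

section Riccati

variable {𝕜 : Type*} [NontriviallyNormedField 𝕜] [CompleteSpace 𝕜] {G : 𝕜 → 𝕜 → 𝕜} {z c : 𝕜}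

lemma iteratedDeriv_succ_succ_of_riccati (hG : AnalyticAt 𝕜 (uncurry G) (z, 0))
    (hG₀ : G z 0 = 0)
    (hriccati : deriv (G z) =ᶠ[𝓝 0] fun w => 1 + deriv (fun t => G t w) z + c * G z w ^ 2)
    (n : ℕ) :
    iteratedDeriv (n + 2) (G z) 0 = deriv (fun t => iteratedDeriv (n + 1) (G t) 0) z +
      c * ∑ k ∈ Icc 1 n, ((n + 1).choose k : 𝕜) * iteratedDeriv k (G z) 0 *
        iteratedDeriv (n + 1 - k) (G z) 0 := by
  have hslice : AnalyticAt 𝕜 (G z) 0 := hG.comp_of_eq (by fun_prop) rfl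
  have hleibniz := iteratedDeriv_fun_mul (n := n + 1) hslice.contDiffAt hslice.contDiffAt
  rw [iteratedDeriv_succ', hriccati.iteratedDeriv_eq]
  simp only [add_assoc, sq]
  have hsq : AnalyticAt 𝕜 (fun w => G z w * G z w) 0 := hslice.fun_mul hslice
  rw [iteratedDeriv_const_add (by omega : 0 < n + 1),
    iteratedDeriv_fun_add hG.analyticAt_deriv_left.contDiffAt
      (analyticAt_const.fun_mul hsq).contDiffAt,
    iteratedDeriv_const_mul _ hsq.contDiffAt, hG.deriv_iteratedDeriv_comm]
  -- the extreme terms `k = 0, n + 1` of the Leibniz sum contain the factor `G z 0 = 0`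
  rw [hleibniz, range_eq_Ico, sum_Ico_succ_top (Nat.zero_le _),
    sum_eq_sum_Ico_succ_bot (by omega : 0 < n + 1), zero_add, Ico_add_one_right_eq_Icc]
  simp only [iteratedDeriv_zero, hG₀, Nat.sub_self, Nat.sub_zero]
  ring

end Riccati

noncomputable def schwarzian (f : ℂ → ℂ) (z : ℂ) : ℂ :=
  iteratedDeriv 3 f z / deriv f z - 3 / 2 * (iteratedDeriv 2 f z / deriv f z) ^ 2

noncomputable def tamanoiDen (f : ℂ → ℂ) (z w : ℂ) : ℂ :=
  1 / 2 * iteratedDeriv 2 f z * (f (z + w) - f z) + deriv f z ^ 2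

section Tamanoi

variable {f : ℂ → ℂ} {z w : ℂ}

lemma tamanoiV_zero_right (f : ℂ → ℂ) (z : ℂ) : tamanoiV f z 0 = 0 := by
  simp [tamanoiV]

lemma tamanoiDen_zero_right (f : ℂ → ℂ) (z : ℂ) : tamanoiDen f z 0 = deriv f z ^ 2 := by
  simp [tamanoiDen]

lemma analyticAt_uncurry_increment (hz : AnalyticAt ℂ f z) (hzw : AnalyticAt ℂ f (z + w)) :
    AnalyticAt ℂ (fun p : ℂ × ℂ => f (p.1 + p.2) - f p.1) (z, w) :=
  (hzw.fun_comp_of_eq (analyticAt_fst.fun_add analyticAt_snd) rfl).fun_sub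
    (hz.fun_comp_of_eq analyticAt_fst rfl)

lemma analyticAt_uncurry_tamanoiDen (hz : AnalyticAt ℂ f z) (hzw : AnalyticAt ℂ f (z + w)) :
    AnalyticAt ℂ (uncurry (tamanoiDen f)) (z, w) := by
  have h1 : AnalyticAt ℂ (fun p : ℂ × ℂ => deriv f p.1) (z, w) :=
    hz.deriv.fun_comp_of_eq analyticAt_fst rfl
  have h2 : AnalyticAt ℂ (fun p : ℂ × ℂ => iteratedDeriv 2 f p.1) (z, w) :=
    (analyticAt_iteratedDeriv hz 2).fun_comp_of_eq analyticAt_fst rfl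
  exact ((analyticAt_const.fun_mul h2).fun_mul (analyticAt_uncurry_increment hz hzw)).fun_add
    (h1.fun_pow 2)

lemma analyticAt_uncurry_tamanoiV (hz : AnalyticAt ℂ f z) (hzw : AnalyticAt ℂ f (z + w))
    (hden : tamanoiDen f z w ≠ 0) : AnalyticAt ℂ (uncurry (tamanoiV f)) (z, w) :=
  ((hz.deriv.fun_comp_of_eq analyticAt_fst rfl).fun_mul
    (analyticAt_uncurry_increment hz hzw)).fun_div (analyticAt_uncurry_tamanoiDen hz hzw) hden

lemma tamanoiV_riccati (hz : AnalyticAt ℂ f z) (hzw : AnalyticAt ℂ f (z + w))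
    (hf' : deriv f z ≠ 0) (hden : tamanoiDen f z w ≠ 0) :
    deriv (tamanoiV f z) w =
      1 + deriv (fun t => tamanoiV f t w) z + 1 / 2 * schwarzian f z * tamanoiV f z w ^ 2 := by
  have hf₀ : HasDerivAt f (deriv f z) z := hz.differentiableAt.hasDerivAt
  have hf₁ : HasDerivAt (deriv f) (iteratedDeriv 2 f z) z := by
    simpa using hasDerivAt_iteratedDeriv_of_analyticAt hz 1
  have hf₂ : HasDerivAt (iteratedDeriv 2 f) (iteratedDeriv 3 f z) z :=
    hasDerivAt_iteratedDeriv_of_analyticAt hz 2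
  have hfw : HasDerivAt f (deriv f (z + w)) (z + w) := hzw.differentiableAt.hasDerivAt
  have hdw : HasDerivAt (tamanoiV f z) _ w :=
    (((hfw.comp_const_add z w).sub_const (f z)).const_mul (deriv f z)).div
      ((((hfw.comp_const_add z w).sub_const (f z)).const_mul _).add_const _) hden
  have hdz : HasDerivAt (fun t => tamanoiV f t w) _ z :=
    (hf₁.fun_mul ((hfw.comp_add_const z w).fun_sub hf₀)).fun_div
      (((hf₂.const_mul _).fun_mul ((hfw.comp_add_const z w).fun_sub hf₀)).fun_add (hf₁.fun_pow 2))
      hden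
  rw [hdw.deriv, hdz.deriv, schwarzian, tamanoiV]
  unfold tamanoiDen at hden
  set d := 1 / 2 * iteratedDeriv 2 f z * (f (z + w) - f z) + deriv f z ^ 2 with hd
  field_simp
  rw [hd]
  ring

lemma eventually_tamanoi_regular (hf : AnalyticAt ℂ f z) (hf' : deriv f z ≠ 0) :
    ∀ᶠ p : ℂ × ℂ in 𝓝 (z, 0),
      AnalyticAt ℂ f p.1 ∧ AnalyticAt ℂ f (p.1 + p.2) ∧ tamanoiDen f p.1 p.2 ≠ 0 := by
  have hsum : Tendsto (fun p : ℂ × ℂ => p.1 + p.2) (𝓝 (z, 0)) (𝓝 z) := by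
    simpa using (by fun_prop : Continuous fun p : ℂ × ℂ => p.1 + p.2).tendsto (z, 0)
  have hden : tamanoiDen f z 0 ≠ 0 := tamanoiDen_zero_right f z ▸ pow_ne_zero 2 hf'
  exact (continuous_fst.tendsto (z, 0) |>.eventually hf.eventually_analyticAt).and <|
    (hsum.eventually hf.eventually_analyticAt).and <|
      (analyticAt_uncurry_tamanoiDen hf (by simpa)).continuousAt.eventually_ne hden

variable (hf : AnalyticAt ℂ f z) (hf' : deriv f z ≠ 0)
include hf hf'

lemma tamanoiS_succ (n : ℕ) :
    tamanoiS f (n + 1) z = deriv (tamanoiS f n) z + 1 / 2 * schwarzian f z *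
      ∑ k ∈ Icc 1 n, ((n + 1).choose k : ℂ) * tamanoiS f (k - 1) z * tamanoiS f (n - k) z := by
  have hreg := eventually_tamanoi_regular hf hf'
  have hriccati : deriv (tamanoiV f z) =ᶠ[𝓝 0]
      fun w => 1 + deriv (fun t => tamanoiV f t w) z +
        1 / 2 * schwarzian f z * tamanoiV f z w ^ 2 :=
    ((Continuous.prodMk_right z).tendsto 0 |>.eventually hreg).mono
      fun _ ⟨_, hzw, hden⟩ => tamanoiV_riccati hf hzw hf' hden
  obtain ⟨-, hz0, hden0⟩ := hreg.self_of_nhds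
  refine (iteratedDeriv_succ_succ_of_riccati (analyticAt_uncurry_tamanoiV hf hz0 hden0)
    (tamanoiV_zero_right f z) hriccati n).trans ?_
  congr 2
  refine sum_congr rfl fun k hk => ?_
  obtain ⟨hk1, hkn⟩ := mem_Icc.mp hk
  rw [tamanoiS, tamanoiS, Nat.sub_add_cancel hk1, ← Nat.sub_add_comm hkn]

lemma tamanoiS_zero : tamanoiS f 0 z = 1 := by
  have hden : tamanoiDen f z 0 ≠ 0 := tamanoiDen_zero_right f z ▸ pow_ne_zero 2 hf'
  rw [tamanoiS, zero_add, iteratedDeriv_one, tamanoiV_riccati hf (by simpa) hf' hden]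
  simp [tamanoiV_zero_right]

lemma tamanoiS_one : tamanoiS f 1 z = 0 := by
  have hS₀ : tamanoiS f 0 =ᶠ[𝓝 z] fun _ => 1 :=
    (hf.eventually_analyticAt_and_deriv_ne_zero hf').mono
      fun _ ht => tamanoiS_zero ht.1 ht.2
  simp [tamanoiS_succ hf hf' 0, hS₀.deriv_eq]

lemma tamanoiS_two : tamanoiS f 2 z = schwarzian f z := by
  have hS₁ : tamanoiS f 1 =ᶠ[𝓝 z] fun _ => 0 :=
    (hf.eventually_analyticAt_and_deriv_ne_zero hf').mono
      fun _ ht => tamanoiS_one ht.1 ht.2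
  simp only [tamanoiS_succ hf hf' 1, hS₁.deriv_eq, deriv_const', Icc_self, sum_singleton,
    Nat.choose_succ_self_right, tsub_self, tamanoiS_zero hf hf']
  ring

end Tamanoi

/-- Recursion formula for Tamanoi's Schwarzian derivatives. -/
theorem tamanoi_recursion (D : Set ℂ) (hD : IsOpen D) (f : ℂ → ℂ)
    (hf : DifferentiableOn ℂ f D) (hf' : ∀ z ∈ D, deriv f z ≠ 0)
    (n : ℕ) (hn : 3 ≤ n) (z : ℂ) (hz : z ∈ D) :
    tamanoiS f n z =
      deriv (tamanoiS f (n - 1)) z +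
        (1 / 2) * tamanoiS f 2 z *
          ∑ k ∈ Finset.Icc 1 (n - 1),
            (n.choose k : ℂ) * tamanoiS f (k - 1) z * tamanoiS f (n - k - 1) z := by
  have hfz : AnalyticAt ℂ f z := hf.analyticAt (hD.mem_nhds hz)
  obtain ⟨m, rfl⟩ : ∃ m, n = m + 1 := ⟨n - 1, by omega⟩
  rw [tamanoiS_succ hfz (hf' z hz) m, tamanoiS_two hfz (hf' z hz)]
  simp only [Nat.add_sub_cancel, Nat.sub_sub, Nat.add_sub_add_right]
end

section
/- Let f be holomorphic near z ∈ ℂ with f′(z) ≠ 0, and set σ_n[f] = S_n[f]/(n+1)!. Then for every integer n ≥ 2, σ_n[f](z) = ψ_n[f](z) + Σ_{k=2}^{n−2} ψ_k[f](z) σ_{n−k}[f](z), where ψ_k[f] are the Aharonov invariants of f. -/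
open Filter Topology PowerSeries
open scoped ContDiff

section TaylorSeries

variable {𝕜 : Type*} [NontriviallyNormedField 𝕜] {F G : 𝕜 → 𝕜} {x : 𝕜}

noncomputable def taylorSeries (F : 𝕜 → 𝕜) (x : 𝕜) : 𝕜⟦X⟧ :=
  mk fun n => iteratedDeriv n F x / n.factorial

@[simp]
theorem coeff_taylorSeries (n : ℕ) :
    coeff n (taylorSeries F x) = iteratedDeriv n F x / n.factorial :=
  coeff_mk _ _

theorem Filter.EventuallyEq.taylorSeries_eq (h : F =ᶠ[𝓝 x] G) :
    taylorSeries F x = taylorSeries G x := by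
  ext n
  simp [h.iteratedDeriv_eq n]

theorem taylorSeries_const (c : 𝕜) : taylorSeries (fun _ => c) x = C c := by
  ext n
  rcases n with _ | n <;> simp [iteratedDeriv_const, coeff_C]

theorem taylorSeries_id_zero : taylorSeries (fun w => w) (0 : 𝕜) = X := by
  ext n
  by_cases hn : n = 1 <;> simp [iteratedDeriv_fun_id_zero, coeff_X, hn]

theorem taylorSeries_comp_const_add (F : 𝕜 → 𝕜) (x : 𝕜) :
    taylorSeries (fun w => F (x + w)) 0 = taylorSeries F x := by
  ext n
  simp [iteratedDeriv_comp_const_add]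

theorem taylorSeries_const_mul (c : 𝕜) (F : 𝕜 → 𝕜) :
    taylorSeries (fun w => c * F w) x = C c * taylorSeries F x := by
  ext n
  simp [mul_div_assoc]

theorem taylorSeries_add (hF : ContDiffAt 𝕜 ∞ F x) (hG : ContDiffAt 𝕜 ∞ G x) :
    taylorSeries (fun w => F w + G w) x = taylorSeries F x + taylorSeries G x := by
  ext n
  simp [iteratedDeriv_fun_add (hF.of_le (mod_cast le_top)) (hG.of_le (mod_cast le_top)), add_div]

theorem taylorSeries_sub (hF : ContDiffAt 𝕜 ∞ F x) (hG : ContDiffAt 𝕜 ∞ G x) :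
    taylorSeries (fun w => F w - G w) x = taylorSeries F x - taylorSeries G x := by
  ext n
  simp [iteratedDeriv_fun_sub (hF.of_le (mod_cast le_top)) (hG.of_le (mod_cast le_top)), sub_div]

theorem hasFPowerSeriesAt_ofScalarsSum [CompleteSpace 𝕜] {c : ℕ → 𝕜} {w₀ : 𝕜} (hw₀ : w₀ ≠ 0)
    (hc : Summable fun n => c n * w₀ ^ n) :
    HasFPowerSeriesAt (FormalMultilinearSeries.ofScalarsSum c)
      (FormalMultilinearSeries.ofScalars 𝕜 c) 0 := by
  have hrad : (‖w₀‖₊ : ENNReal) ≤ (FormalMultilinearSeries.ofScalars 𝕜 c).radius := by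
    refine FormalMultilinearSeries.le_radius_of_tendsto _ (l := 0) ?_
    simpa [FormalMultilinearSeries.ofScalars_norm] using hc.tendsto_atTop_zero.norm
  exact ⟨_, FormalMultilinearSeries.hasFPowerSeriesOnBall _
    (lt_of_lt_of_le (by simpa using hw₀) hrad)⟩

variable [CharZero 𝕜]

theorem taylorSeries_mul (hF : ContDiffAt 𝕜 ∞ F x) (hG : ContDiffAt 𝕜 ∞ G x) :
    taylorSeries (fun w => F w * G w) x = taylorSeries F x * taylorSeries G x := by
  ext n
  simp only [coeff_taylorSeries, iteratedDeriv_fun_mul (hF.of_le (mod_cast le_top))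
    (hG.of_le (mod_cast le_top)), coeff_mul, Finset.Nat.sum_antidiagonal_eq_sum_range_succ_mk,
    Finset.sum_div]
  refine Finset.sum_congr rfl fun i hi => ?_
  rw [Nat.cast_choose 𝕜 (Finset.mem_range_succ_iff.mp hi)]
  field_simp [Nat.factorial_ne_zero]

theorem taylorSeries_div_mul {N D : 𝕜 → 𝕜} (hN : ContDiffAt 𝕜 ∞ N x)
    (hD : ContDiffAt 𝕜 ∞ D x) (hDx : D x ≠ 0) :
    taylorSeries (fun w => N w / D w) x * taylorSeries D x = taylorSeries N x := by
  rw [← taylorSeries_mul (F := fun w => N w / D w) (hN.div hD hDx) hD]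
  refine EventuallyEq.taylorSeries_eq ?_
  filter_upwards [hD.continuousAt.eventually_ne hDx] with w hw
  exact div_mul_cancel₀ _ hw

theorem HasFPowerSeriesAt.taylorSeries_eq [CompleteSpace 𝕜] {c : ℕ → 𝕜}
    (h : HasFPowerSeriesAt F (FormalMultilinearSeries.ofScalars 𝕜 c) x) :
    taylorSeries F x = mk c := by
  have := (FormalMultilinearSeries.ofScalars_series_injective (𝕜 := 𝕜) (E := 𝕜))
    (h.analyticAt.hasFPowerSeriesAt.eq_formalMultilinearSeries h)
  ext n
  simp [congrFun this n]

theorem C_mul_X_eq_taylorSeries_mul_one_sub_X_mul {g h : 𝕜 → 𝕜} (hg : ContDiffAt 𝕜 ∞ g 0)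
    (hh : ContDiffAt 𝕜 ∞ h 0) (hg₀ : g 0 = 0) (hg' : deriv g 0 ≠ 0)
    (hgh : ∀ᶠ w in 𝓝[≠] 0, h w = 1 / w - deriv g 0 / g w) :
    C (deriv g 0) * X = taylorSeries g 0 * (1 - X * taylorSeries h 0) := by
  have hne : ∀ᶠ w in 𝓝[≠] (0 : 𝕜), g w ≠ 0 := by
    simpa [hg₀] using (hg.differentiableAt (by simp)).hasDerivAt.eventually_ne (c := g 0) hg'
  have heq : (fun w => deriv g 0 * w) =ᶠ[𝓝 0] fun w => g w * (1 - w * h w) := by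
    rw [EventuallyEq, ← nhdsNE_sup_pure, eventually_sup, eventually_pure]
    refine ⟨?_, by simp [hg₀]⟩
    filter_upwards [hne, hgh, self_mem_nhdsWithin] with w hgw hw (hw₀ : w ≠ 0)
    rw [hw]
    field_simp
    ring
  calc C (deriv g 0) * X = taylorSeries (fun w => deriv g 0 * w) 0 := by
        rw [taylorSeries_const_mul, taylorSeries_id_zero]
    _ = taylorSeries (fun w => g w * (1 - w * h w)) 0 := heq.taylorSeries_eq
    _ = taylorSeries g 0 * (1 - X * taylorSeries h 0) := by
        simp (disch := fun_prop) only [taylorSeries_mul, taylorSeries_sub, taylorSeries_const,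
          taylorSeries_id_zero, map_one]

end TaylorSeries

namespace PowerSeries

theorem coeff_X_mul_sub_C_constantCoeff {R : Type*} [CommRing R] (φ : R⟦X⟧) {n : ℕ}
    (hn : 2 ≤ n) : coeff n (X * (φ - C (constantCoeff φ))) = coeff (n - 1) φ := by
  obtain ⟨m, rfl⟩ : ∃ m, n = m + 1 := ⟨n - 1, by omega⟩
  simp [coeff_C, show m ≠ 0 by omega]

theorem coeff_succ_eq_of_mul_one_sub_eq_X {R : Type*} [CommRing R] {V Q : R⟦X⟧}
    (hQ₀ : constantCoeff Q = 0) (hQ₁ : coeff 1 Q = 0) (hV : V * (1 - Q) = X) {n : ℕ}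
    (hn : 2 ≤ n) :
    coeff (n + 1) V = coeff n Q + ∑ k ∈ Finset.Icc 2 (n - 2), coeff k Q * coeff (n - k + 1) V := by
  have hcoeff : ∀ m, coeff m V =
      coeff m X + ∑ k ∈ Finset.range (m + 1), coeff k Q * coeff (m - k) V := fun m => by
    conv_lhs => rw [show V = X + Q * V by linear_combination hV]
    rw [map_add, coeff_mul, Finset.Nat.sum_antidiagonal_eq_sum_range_succ_mk]
  have hV₀ : constantCoeff V = 0 := by simpa [hQ₀] using hcoeff 0
  have hV₁ : coeff 1 V = 1 := by simpa [Finset.sum_range_succ, hQ₀, hQ₁, hV₀] using hcoeff 1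
  have hV₂ : coeff 2 V = 0 := by
    simpa [Finset.sum_range_succ, hQ₀, hQ₁, hV₀, coeff_X] using hcoeff 2
  have hsub : insert n (Finset.Icc 2 (n - 2)) ⊆ Finset.range (n + 2) := by
    intro k hk
    simp only [Finset.mem_insert, Finset.mem_Icc, Finset.mem_range] at hk ⊢
    omega
  have hzero : ∀ k ∈ Finset.range (n + 2), k ∉ insert n (Finset.Icc 2 (n - 2)) →
      coeff k Q * coeff (n + 1 - k) V = 0 := by
    intro k hk hk'
    simp only [Finset.mem_insert, Finset.mem_Icc, Finset.mem_range, not_or, not_and_or] at hk hk'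
    obtain rfl | rfl | rfl | rfl : k = 0 ∨ k = 1 ∨ k = n - 1 ∨ k = n + 1 := by omega
    · simp [hQ₀]
    · simp [hQ₁]
    · rw [show n + 1 - (n - 1) = 2 by omega, hV₂, mul_zero]
    · simp [hV₀]
  rw [hcoeff, coeff_X, if_neg (by omega), zero_add, ← Finset.sum_subset hsub hzero,
    Finset.sum_insert (by simp only [Finset.mem_Icc]; omega), Nat.add_sub_cancel_left, hV₁,
    mul_one]
  refine congrArg _ (Finset.sum_congr rfl fun k hk => ?_)
  rw [Finset.mem_Icc] at hk
  rw [show n + 1 - k = n - k + 1 by omega]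

theorem mul_one_sub_X_mul_eq_X {K : Type*} [Field K] {G H V : K⟦X⟧} {a : K}
    (ha : a ≠ 0) (hG : C a * X = G * (1 - X * H))
    (hV : V * (C (coeff 2 G) * G + C (a ^ 2)) = C a * G) :
    V * (1 - X * (H - C (constantCoeff H))) = X := by
  have hG' : C a * X = G - X * (G * H) := by rw [hG]; ring
  have hG₀ : constantCoeff G = 0 := by simpa using (congrArg constantCoeff hG').symm
  have hG₁ : coeff 1 G = a := by simpa [hG₀, coeff_X] using (congrArg (coeff 1) hG').symm
  have hb : coeff 2 G = a * constantCoeff H := by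
    have h2 := congrArg (coeff 2) hG'
    rw [coeff_C_mul, coeff_X, if_neg (by norm_num), map_sub, coeff_succ_X_mul, coeff_one_mul,
      hG₀, hG₁] at h2
    linear_combination -h2
  have hCa : C (a ^ 2) ≠ 0 := by simpa using pow_ne_zero 2 ha
  refine mul_left_cancel₀ hCa ?_
  rw [hb, map_mul, map_pow] at hV
  rw [map_pow]
  -- multiply `hV` by `1 - X * H` and replace `G * (1 - X * H)` by `C a * X`
  linear_combination (1 - X * H) * hV + (V * C a * C (constantCoeff H) - C a) * hG

end PowerSeries

section Tamanoi

variable {f h : ℂ → ℂ} {z : ℂ}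

theorem tamanoiS_div_factorial (n : ℕ) :
    tamanoiS f n z / ((n + 1).factorial : ℂ) = coeff (n + 1) (taylorSeries (tamanoiV f z) 0) :=
  (coeff_taylorSeries _).symm

theorem taylorSeries_tamanoiV_mul_one_sub_X_mul (hf : AnalyticAt ℂ f z) (hf' : deriv f z ≠ 0)
    (hh : AnalyticAt ℂ h 0)
    (hfh : ∀ᶠ w in 𝓝[≠] 0, h w = 1 / w - deriv f z / (f (z + w) - f z)) :
    taylorSeries (tamanoiV f z) 0 *
      (1 - X * (taylorSeries h 0 - C (constantCoeff (taylorSeries h 0)))) = X := by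
  set g : ℂ → ℂ := fun w => f (z + w) - f z
  have hshift : AnalyticAt ℂ (fun w => f (z + w)) 0 :=
    (by simpa using hf : AnalyticAt ℂ f (z + 0)).comp (by fun_prop)
  have hg : ContDiffAt ℂ ∞ g 0 := (hshift.sub analyticAt_const).contDiffAt
  have hg_series : taylorSeries g 0 = taylorSeries f z - C (f z) := by
    rw [taylorSeries_sub hshift.contDiffAt contDiffAt_const, taylorSeries_comp_const_add,
      taylorSeries_const]
  have hg' : deriv g 0 = deriv f z := by simp [g, deriv_comp_const_add]
  have hG := C_mul_X_eq_taylorSeries_mul_one_sub_X_mul hg hh.contDiffAt (by simp [g])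
    (hg' ▸ hf') (hg' ▸ hfh)
  have hV := taylorSeries_div_mul (N := fun w => deriv f z * g w)
    (D := fun w => 1 / 2 * iteratedDeriv 2 f z * g w + deriv f z ^ 2) (x := 0)
    (by fun_prop) (by fun_prop) (by simpa [g] using pow_ne_zero 2 hf')
  have hb : coeff 2 (taylorSeries g 0) = 1 / 2 * iteratedDeriv 2 f z := by
    rw [hg_series, map_sub, coeff_taylorSeries, coeff_C, if_neg (by norm_num), sub_zero,
      Nat.factorial_two, Nat.cast_ofNat]
    ring
  rw [hg'] at hG
  refine mul_one_sub_X_mul_eq_X hf' hG ?_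
  simp (disch := fun_prop) only [taylorSeries_add, taylorSeries_const_mul, taylorSeries_const]
    at hV
  rwa [hb]

end Tamanoi

/-- `σ_n[f] = ψ_n[f] + ∑_{k=2}^{n-2} ψ_k[f] σ_{n-k}[f]` where `σ_n[f] = S_n[f]/(n+1)!`
and the `ψ_k[f]` are the Aharonov invariants, defined by the expansion
`f'(z)/(f(z+w) - f(z)) = 1/w - ∑_{n≥1} ψ_n[f](z) w^{n-1}` for small `w ≠ 0`. -/
theorem sigma_psi_recursion (f : ℂ → ℂ) (z : ℂ) (hf : AnalyticAt ℂ f z)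
    (hf' : deriv f z ≠ 0) (ψ : ℕ → ℂ) (r : ℝ) (hr : 0 < r)
    (hψ : ∀ w : ℂ, w ≠ 0 → ‖w‖ < r →
      HasSum (fun m : ℕ => ψ (m + 1) * w ^ m)
        (1 / w - deriv f z / (f (z + w) - f z)))
    (n : ℕ) (hn : 2 ≤ n) :
    tamanoiS f n z / ((n + 1).factorial : ℂ) =
      ψ n + ∑ k ∈ Finset.Icc 2 (n - 2),
        ψ k * (tamanoiS f (n - k) z / (((n - k) + 1).factorial : ℂ)) := by
  obtain ⟨w₀, hw₀, hw₀r⟩ := NormedField.exists_norm_lt ℂ hr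
  have hH := hasFPowerSeriesAt_ofScalarsSum (norm_pos_iff.1 hw₀)
    (hψ w₀ (norm_pos_iff.1 hw₀) hw₀r).summable
  have hH_eq : ∀ᶠ w in 𝓝[≠] 0, FormalMultilinearSeries.ofScalarsSum (fun m => ψ (m + 1)) w =
      1 / w - deriv f z / (f (z + w) - f z) := by
    filter_upwards [nhdsWithin_le_nhds (Metric.ball_mem_nhds 0 hr), self_mem_nhdsWithin]
      with w hwr (hw : w ≠ 0)
    rw [FormalMultilinearSeries.ofScalars_sum_eq]
    simpa [mul_comm] using (hψ w hw (by simpa using hwr)).tsum_eq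
  have hV := taylorSeries_tamanoiV_mul_one_sub_X_mul hf hf' hH.analyticAt hH_eq
  rw [hH.taylorSeries_eq] at hV
  have hQ : ∀ k, 2 ≤ k →
      coeff k (X * (mk (fun m => ψ (m + 1)) - C (constantCoeff (mk fun m => ψ (m + 1))))) = ψ k :=
    fun k hk => by
      rw [coeff_X_mul_sub_C_constantCoeff _ hk, coeff_mk, Nat.sub_add_cancel (by omega : 1 ≤ k)]
  rw [tamanoiS_div_factorial, coeff_succ_eq_of_mul_one_sub_eq_X (by simp) (by simp) hV hn,
    hQ n hn]
  refine congrArg _ (Finset.sum_congr rfl fun k hk => ?_)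
  rw [hQ k (Finset.mem_Icc.1 hk).1, tamanoiS_div_factorial]
end

section
/- For every integer n ≥ 2 there exists a polynomial Q_n with nonnegative integer coefficients in variables y_2, …, y_n, independent of f, such that for every holomorphic function f near z ∈ ℂ with f′(z) ≠ 0, σ_n[f](z) = Q_n(ψ_2[f](z), …, ψ_n[f](z)), where σ_n[f] = S_n[f]/(n+1)!. -/
open MvPolynomial Topology FormalMultilinearSeries

section PowerSeries

variable {𝕜 : Type*} [NontriviallyNormedField 𝕜]

theorem FormalMultilinearSeries.coeff_ofScalars_comp_ofScalars (a b : ℕ → 𝕜) (n : ℕ) :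
    ((ofScalars 𝕜 b).comp (ofScalars 𝕜 a)).coeff n =
      ∑ c : Composition n, b c.length * ∏ i, a (c.blocksFun i) := by
  simp only [FormalMultilinearSeries.coeff, FormalMultilinearSeries.comp, sum_apply,
    compAlongComposition_apply]
  simp [mul_comm]

theorem hasFPowerSeriesAt_ofScalars_iff {f : 𝕜 → 𝕜} {a : ℕ → 𝕜} {x : 𝕜} :
    HasFPowerSeriesAt f (ofScalars 𝕜 a) x ↔
      ∀ᶠ w in 𝓝 0, HasSum (fun n => a n * w ^ n) (f (x + w)) := by
  simp only [hasFPowerSeriesAt_iff, coeff_ofScalars, smul_eq_mul, mul_comm]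

theorem HasFPowerSeriesAt.iteratedDeriv_eq_factorial_smul_coeff {E : Type*}
    [NormedAddCommGroup E] [NormedSpace 𝕜 E] [CompleteSpace E] {f : 𝕜 → E}
    {p : FormalMultilinearSeries 𝕜 𝕜 E} {x : 𝕜} (hf : HasFPowerSeriesAt f p x) (n : ℕ) :
    iteratedDeriv n f x = n.factorial • p.coeff n := by
  obtain ⟨r, hr⟩ := hf
  rw [iteratedDeriv_eq_iteratedFDeriv, ← hr.factorial_smul]
  rfl

theorem iteratedDeriv_succ_id_mul_zero {h : 𝕜 → 𝕜} {n : ℕ} (hh : ContDiffAt 𝕜 (n + 1) h 0) :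
    iteratedDeriv (n + 1) (fun w => w * h w) 0 = (n + 1) * iteratedDeriv n h 0 := by
  rw [iteratedDeriv_fun_mul (f := fun w => w) contDiffAt_id hh, Finset.sum_eq_single 1]
  · simp [iteratedDeriv_fun_id_zero]
  · intro i _ hi
    simp [iteratedDeriv_fun_id_zero, hi]
  · simp

end PowerSeries

section Increment

variable {𝕜 F : Type*} [NontriviallyNormedField 𝕜] [NormedAddCommGroup F] [NormedSpace 𝕜 F]
  {f : 𝕜 → F} {z : 𝕜}

theorem analyticAt_increment (hf : AnalyticAt 𝕜 f z) :
    AnalyticAt 𝕜 (fun w => f (z + w) - f z) 0 := by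
  have : AnalyticAt 𝕜 f (z + 0) := by simpa using hf
  exact (this.comp_of_eq (by fun_prop) rfl).sub analyticAt_const

theorem iteratedDeriv_increment {k : ℕ} (hk : 0 < k) :
    iteratedDeriv k (fun w => f (z + w) - f z) 0 = iteratedDeriv k f z := by
  simp_rw [sub_eq_neg_add, iteratedDeriv_const_add hk, iteratedDeriv_comp_const_add, add_zero]

theorem eventually_increment_ne_zero (hf : DifferentiableAt 𝕜 f z) (hf' : deriv f z ≠ 0) :
    ∀ᶠ w in 𝓝[≠] 0, f (z + w) - f z ≠ 0 := by
  have : HasDerivAt (fun w => f (z + w)) (deriv f z) 0 :=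
    HasDerivAt.comp_const_add z 0 (by simpa using hf.hasDerivAt)
  filter_upwards [this.eventually_ne hf'] with w hw
  exact sub_ne_zero.2 hw

end Increment

def vanishBelowTwo {α : Type*} [Zero α] (a : ℕ → α) (k : ℕ) : α := if 2 ≤ k then a k else 0

def HasAharonovExpansion (f : ℂ → ℂ) (z : ℂ) (ψ : ℕ → ℂ) (r : ℝ) : Prop :=
  ∀ w : ℂ, w ≠ 0 → ‖w‖ < r →
    HasSum (fun m : ℕ => ψ (m + 1) * w ^ m) (1 / w - deriv f z / (f (z + w) - f z))

namespace HasAharonovExpansion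

variable {f : ℂ → ℂ} {z : ℂ} {ψ : ℕ → ℂ} {r : ℝ}

theorem hasSum_vanishBelowTwo (hψ : HasAharonovExpansion f z ψ r) {w : ℂ} (hw : w ≠ 0)
    (hwr : ‖w‖ < r) :
    HasSum (fun k => vanishBelowTwo ψ k * w ^ k)
      (1 - ψ 1 * w - deriv f z * w / (f (z + w) - f z)) := by
  have h1 := (hasSum_nat_add_iff' 1).2 ((hψ w hw hwr).mul_left w)
  rw [← hasSum_nat_add_iff' 2]
  convert h1 using 1
  · ext m
    simp only [vanishBelowTwo, le_add_iff_nonneg_left, zero_le, ↓reduceIte]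
    ring
  · simp only [vanishBelowTwo, Finset.sum_range_succ, Finset.sum_range_zero, Nat.not_ofNat_le_one,
      nonpos_iff_eq_zero, OfNat.ofNat_ne_zero, ↓reduceIte]
    field_simp
    ring

theorem hasFPowerSeriesAt_ofScalarsSum (hψ : HasAharonovExpansion f z ψ r) (hr : 0 < r) :
    HasFPowerSeriesAt (ofScalarsSum (vanishBelowTwo ψ)) (ofScalars ℂ (vanishBelowTwo ψ)) 0 := by
  rw [hasFPowerSeriesAt_ofScalars_iff]
  filter_upwards [Metric.ball_mem_nhds 0 hr] with w hw
  rw [mem_ball_zero_iff] at hw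
  have hsum : Summable fun k => vanishBelowTwo ψ k * w ^ k := by
    rcases eq_or_ne w 0 with rfl | hw0
    · refine summable_of_ne_finset_zero (s := ∅) fun k _ => ?_
      rcases k with _ | k <;> simp [vanishBelowTwo]
    · exact (hψ.hasSum_vanishBelowTwo hw0 hw).summable
  simpa [ofScalarsSum_eq_tsum] using hsum.hasSum

theorem mul_increment_eventuallyEq (hψ : HasAharonovExpansion f z ψ r) (hr : 0 < r)
    (hf : DifferentiableAt ℂ f z) (hf' : deriv f z ≠ 0) :
    (fun w => (1 - ψ 1 * w - ofScalarsSum (vanishBelowTwo ψ) w) * (f (z + w) - f z)) =ᶠ[𝓝 0]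
      fun w => deriv f z * w := by
  refine eventuallyEq_nhds_of_eventuallyEq_nhdsNE ?_ (by simp)
  filter_upwards [eventually_increment_ne_zero hf hf', self_mem_nhdsWithin,
    nhdsWithin_le_nhds (Metric.ball_mem_nhds 0 hr)] with w hg hw0 hwr
  rw [ofScalarsSum_eq_tsum]
  simp only [smul_eq_mul]
  rw [(hψ.hasSum_vanishBelowTwo hw0 (mem_ball_zero_iff.1 hwr)).tsum_eq]
  field_simp
  ring

theorem two_mul_psi_one_mul_deriv (hψ : HasAharonovExpansion f z ψ r) (hr : 0 < r)
    (hf : AnalyticAt ℂ f z) (hf' : deriv f z ≠ 0) :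
    2 * ψ 1 * deriv f z = iteratedDeriv 2 f z := by
  set s := ofScalarsSum (E := ℂ) (vanishBelowTwo ψ)
  have hs := hψ.hasFPowerSeriesAt_ofScalarsSum hr
  have hu : AnalyticAt ℂ (fun w => 1 - ψ 1 * w - s w) 0 := by
    have := hs.analyticAt
    fun_prop
  have hs₀ : s 0 = 0 := by simp [s, vanishBelowTwo]
  have hu₁ : deriv (fun w => 1 - ψ 1 * w - s w) 0 = -ψ 1 := by
    have hs₁ : deriv s 0 = 0 := by
      simpa [vanishBelowTwo] using hs.iteratedDeriv_eq_factorial_smul_coeff 1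
    rw [deriv_fun_sub (by fun_prop) hs.differentiableAt, hs₁]
    simp
  have h2 := (hψ.mul_increment_eventuallyEq hr hf.differentiableAt hf').iteratedDeriv_eq 2
  rw [iteratedDeriv_fun_mul hu.contDiffAt (analyticAt_increment hf).contDiffAt,
    iteratedDeriv_const_mul_field, iteratedDeriv_fun_id_zero] at h2
  simp only [Finset.sum_range_succ, Finset.sum_range_zero, Nat.reduceSub, Nat.choose_zero_right,
    Nat.choose_one_right, Nat.choose_self, iteratedDeriv_zero, iteratedDeriv_one, hs₀, hu₁,
    iteratedDeriv_increment two_pos, iteratedDeriv_increment one_pos, add_zero, sub_self,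
    OfNat.ofNat_ne_one, ↓reduceIte, mul_zero] at h2
  linear_combination -h2

theorem tamanoiV_eventuallyEq (hψ : HasAharonovExpansion f z ψ r) (hr : 0 < r)
    (hf : AnalyticAt ℂ f z) (hf' : deriv f z ≠ 0) :
    tamanoiV f z =ᶠ[𝓝 0] fun w => w * (1 - ofScalarsSum (vanishBelowTwo ψ) w)⁻¹ := by
  set s := ofScalarsSum (E := ℂ) (vanishBelowTwo ψ)
  have hden : ∀ᶠ w in 𝓝 0,
      (1 / 2) * iteratedDeriv 2 f z * (f (z + w) - f z) + deriv f z ^ 2 ≠ 0 := by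
    have hg := (analyticAt_increment hf).continuousAt
    refine ContinuousAt.eventually_ne (by fun_prop) ?_
    simpa using hf'
  have hψ₁ := hψ.two_mul_psi_one_mul_deriv hr hf hf'
  filter_upwards [hψ.mul_increment_eventuallyEq hr hf.differentiableAt hf', hden]
    with w hmul hden
  rcases eq_or_ne w 0 with rfl | hw
  · simp [tamanoiV]
  have key : (1 - s w) * (deriv f z * (f (z + w) - f z)) =
      w * ((1 / 2) * iteratedDeriv 2 f z * (f (z + w) - f z) + deriv f z ^ 2) := by
    linear_combination deriv f z * hmul + (w * (f (z + w) - f z) / 2) * hψ₁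
  have hs_ne : 1 - s w ≠ 0 := by
    rintro h
    exact mul_ne_zero hw hden (by rw [← key, h, zero_mul])
  rw [tamanoiV, div_eq_iff hden]
  field_simp
  linear_combination 2 * key

theorem tamanoiS_div_factorial (hψ : HasAharonovExpansion f z ψ r) (hr : 0 < r)
    (hf : AnalyticAt ℂ f z) (hf' : deriv f z ≠ 0) (n : ℕ) :
    tamanoiS f n z / (n + 1).factorial =
      ∑ c : Composition n, ∏ i, vanishBelowTwo ψ (c.blocksFun i) := by
  set s := ofScalarsSum (E := ℂ) (vanishBelowTwo ψ)
  have hgeom : HasFPowerSeriesAt (fun x : ℂ => (1 - x)⁻¹) (formalMultilinearSeries_geometric ℂ ℂ)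
      (s 0) := by
    simpa [s, vanishBelowTwo] using (hasFPowerSeriesOnBall_inv_one_sub ℂ ℂ).hasFPowerSeriesAt
  have hcomp : HasFPowerSeriesAt (fun w => (1 - s w)⁻¹)
      ((formalMultilinearSeries_geometric ℂ ℂ).comp (ofScalars ℂ (vanishBelowTwo ψ))) 0 :=
    hgeom.comp (hψ.hasFPowerSeriesAt_ofScalarsSum hr)
  rw [tamanoiS, (hψ.tamanoiV_eventuallyEq hr hf hf').iteratedDeriv_eq,
    iteratedDeriv_succ_id_mul_zero hcomp.analyticAt.contDiffAt,
    hcomp.iteratedDeriv_eq_factorial_smul_coeff, formalMultilinearSeries_geometric_eq_ofScalars,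
    coeff_ofScalars_comp_ofScalars]
  have hfact : (n.factorial : ℂ) ≠ 0 := Nat.cast_ne_zero.2 n.factorial_ne_zero
  simp only [Nat.factorial_succ, one_mul, nsmul_eq_mul]
  push_cast
  field_simp

end HasAharonovExpansion

noncomputable def sigmaPoly (n : ℕ) : MvPolynomial ℕ ℕ :=
  ∑ c : Composition n, ∏ i, vanishBelowTwo X (c.blocksFun i)

theorem aeval_sigmaPoly {A : Type*} [CommSemiring A] (x : ℕ → A) (n : ℕ) :
    aeval x (sigmaPoly n) = ∑ c : Composition n, ∏ i, vanishBelowTwo x (c.blocksFun i) := by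
  simp [sigmaPoly, vanishBelowTwo, apply_ite]

theorem mem_vars_sigmaPoly {n m : ℕ} (hm : m ∈ (sigmaPoly n).vars) : 2 ≤ m ∧ m ≤ n := by
  obtain ⟨c, -, hc⟩ := Finset.mem_biUnion.1 (vars_sum_subset _ _ hm)
  obtain ⟨i, -, hi⟩ := Finset.mem_biUnion.1 (vars_prod _ hc)
  unfold vanishBelowTwo at hi
  split_ifs at hi with h
  · rw [vars_X, Finset.mem_singleton] at hi
    exact hi ▸ ⟨h, c.blocksFun_le i⟩
  · simp at hi

theorem sigma_polynomial_in_psi_general (n : ℕ) :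
    ∃ Q : MvPolynomial ℕ ℤ,
      (∀ d, 0 ≤ Q.coeff d) ∧
      (∀ m ∈ Q.vars, 2 ≤ m ∧ m ≤ n) ∧
      ∀ (f : ℂ → ℂ) (z : ℂ), AnalyticAt ℂ f z → deriv f z ≠ 0 →
        ∀ (ψ : ℕ → ℂ) (r : ℝ), 0 < r →
          (∀ w : ℂ, w ≠ 0 → ‖w‖ < r →
            HasSum (fun m : ℕ => ψ (m + 1) * w ^ m)
              (1 / w - deriv f z / (f (z + w) - f z))) →
          tamanoiS f n z / ((n + 1).factorial : ℂ) = MvPolynomial.aeval ψ Q := by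
  refine ⟨map (algebraMap ℕ ℤ) (sigmaPoly n), fun d => by simp [coeff_map],
    fun m hm => mem_vars_sigmaPoly (vars_map _ _ hm), ?_⟩
  intro f z hf hf' ψ r hr hψ
  rw [aeval_map_algebraMap, aeval_sigmaPoly]
  exact HasAharonovExpansion.tamanoiS_div_factorial hψ hr hf hf' n

/-- For every `n ≥ 2` there is a polynomial `Q_n` with nonnegative integer coefficients
in the variables `y_2, …, y_n`, independent of `f`, such that
`σ_n[f](z) = Q_n(ψ_2[f](z), …, ψ_n[f](z))`, where `σ_n[f] = S_n[f]/(n+1)!` and the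
Aharonov invariants `ψ_k[f]` are defined by the expansion
`f'(z)/(f(z+w) - f(z)) = 1/w - ∑_{m≥1} ψ_m[f](z) w^{m-1}` for small `w ≠ 0`. -/
theorem sigma_polynomial_in_psi (n : ℕ) (hn : 2 ≤ n) :
    ∃ Q : MvPolynomial ℕ ℤ,
      (∀ d, 0 ≤ Q.coeff d) ∧
      (∀ m ∈ Q.vars, 2 ≤ m ∧ m ≤ n) ∧
      ∀ (f : ℂ → ℂ) (z : ℂ), AnalyticAt ℂ f z → deriv f z ≠ 0 →
        ∀ (ψ : ℕ → ℂ) (r : ℝ), 0 < r →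
          (∀ w : ℂ, w ≠ 0 → ‖w‖ < r →
            HasSum (fun m : ℕ => ψ (m + 1) * w ^ m)
              (1 / w - deriv f z / (f (z + w) - f z))) →
          tamanoiS f n z / ((n + 1).factorial : ℂ) = MvPolynomial.aeval ψ Q :=
  sigma_polynomial_in_psi_general n
end

section
/- For every n ≥ 0, the polynomial P_n is of weight n; that is, P_n is an R-linear combination of monomials x_{j_1}⋯x_{j_k} with j_1 + ⋯ + j_k = n. -/
open MvPolynomial

/-- The derivation `𝓔P = ∑_{m ≥ 1} (x_{m+1} - x_1 x_m) ∂P/∂x_m` (a finite sum since `P`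
involves only finitely many variables). -/
noncomputable def Ederiv (P : MvPolynomial ℕ ℚ) : MvPolynomial ℕ ℚ :=
  ∑ m ∈ P.vars.erase 0, (X (m + 1) - X 1 * X m) * pderiv m P

open Finsupp

local notation "w" => (fun i : ℕ => (i : ℤ))

lemma hom_neg {φ : MvPolynomial ℕ ℚ} {k : ℤ} (h : IsWeightedHomogeneous w φ k) :
    IsWeightedHomogeneous w (-φ) k := by
  intro d hd
  exact h (by simpa using hd)

lemma hom_sub {φ ψ : MvPolynomial ℕ ℚ} {k : ℤ} (h1 : IsWeightedHomogeneous w φ k)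
    (h2 : IsWeightedHomogeneous w ψ k) : IsWeightedHomogeneous w (φ - ψ) k := by
  rw [sub_eq_add_neg]; exact h1.add (hom_neg h2)

lemma hom_pderiv {φ : MvPolynomial ℕ ℚ} {k : ℤ} (m : ℕ) (h : IsWeightedHomogeneous w φ k) :
    IsWeightedHomogeneous w (pderiv m φ) (k - m) := by
  conv_lhs => rw [φ.as_sum]
  rw [map_sum]
  apply IsWeightedHomogeneous.sum
  intro d hd
  rw [pderiv_monomial]
  rcases Nat.eq_zero_or_pos (d m) with h0 | h0
  · rw [h0]; simpa using isWeightedHomogeneous_zero ℚ (fun i : ℕ => (i:ℤ)) (k - m)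
  · apply isWeightedHomogeneous_monomial
    have hle : Finsupp.single m 1 ≤ d := Finsupp.single_le_iff.mpr h0
    have := h (MvPolynomial.mem_support_iff.mp hd)
    have hd2 : d - Finsupp.single m 1 + Finsupp.single m 1 = d := tsub_add_cancel_of_le hle
    have := congrArg (weight w) hd2
    rw [map_add] at this
    have hs : weight w (Finsupp.single m 1) = (m : ℤ) := by
      simp [weight_apply]
    rw [hs, h (MvPolynomial.mem_support_iff.mp hd)] at this
    omega

lemma hom_Ederiv {φ : MvPolynomial ℕ ℚ} {k : ℤ} (h : IsWeightedHomogeneous w φ k) :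
    IsWeightedHomogeneous w (Ederiv φ) (k + 1) := by
  apply IsWeightedHomogeneous.sum
  intro m hm
  have : (k + 1 : ℤ) = ((m : ℤ) + 1) + (k - m) := by ring
  rw [this]
  refine IsWeightedHomogeneous.mul ?_ (hom_pderiv m h)
  have h1 : IsWeightedHomogeneous w (X (m+1) : MvPolynomial ℕ ℚ) ((m : ℤ) + 1) := by
    simpa using isWeightedHomogeneous_X ℚ w (m+1)
  have h2 : IsWeightedHomogeneous w (X 1 * X m : MvPolynomial ℕ ℚ) ((m : ℤ) + 1) := by
    have := (isWeightedHomogeneous_X ℚ w 1).mul (isWeightedHomogeneous_X ℚ w m)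
    simpa [add_comm] using this
  exact hom_sub h1 h2

/-- Each polynomial `P_n` (defined by `P_0 = 1`, `P_1 = 0`, `P_2 = x_2 - (3/2)x_1²` and
`P_n = 𝓔P_{n-1} + (1/2) P_2 ∑_{k=1}^{n-1} C(n,k) P_{k-1} P_{n-k-1}` for `n ≥ 3`)
is of weight `n`: every monomial `x_{j_1}⋯x_{j_k}` occurring in `P_n` has
`j_1 + ⋯ + j_k = n`. -/
theorem tamP_weight (P : ℕ → MvPolynomial ℕ ℚ)
    (hP0 : P 0 = 1) (hP1 : P 1 = 0)
    (hP2 : P 2 = X 2 - C (3 / 2 : ℚ) * X 1 ^ 2)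
    (hPrec : ∀ n, 3 ≤ n → P n = Ederiv (P (n - 1)) +
      C (1 / 2 : ℚ) * P 2 *
        ∑ k ∈ Finset.Icc 1 (n - 1), C (n.choose k : ℚ) * P (k - 1) * P (n - k - 1))
    (n : ℕ) :
    ∀ d ∈ (P n).support, (d.sum fun i e => i * e) = n := by
  have h2 : IsWeightedHomogeneous w (P 2) 2 := by
    rw [hP2]
    apply hom_sub
    · simpa using isWeightedHomogeneous_X ℚ w 2
    · have hx : IsWeightedHomogeneous w ((X 1 : MvPolynomial ℕ ℚ) ^ 2) 2 := by
        have := (isWeightedHomogeneous_X ℚ w 1).mul (isWeightedHomogeneous_X ℚ w 1)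
        rw [← sq] at this
        norm_num at this ⊢
        exact this
      have := (isWeightedHomogeneous_C w (3/2 : ℚ)).mul hx
      simpa using this
  have key : ∀ n, IsWeightedHomogeneous w (P n) n := by
    intro n
    induction n using Nat.strong_induction_on with
    | _ n ih =>
      match n, ih with
      | 0, _ => rw [hP0]; exact isWeightedHomogeneous_one ℚ w
      | 1, _ => rw [hP1]; exact isWeightedHomogeneous_zero ℚ w 1
      | 2, _ => exact h2
      | (n+3), ih =>
        rw [hPrec (n+3) (by omega)]
        apply IsWeightedHomogeneous.add
        · have := hom_Ederiv (ih (n+3-1) (by omega))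
          have e : ((n+3 : ℕ) : ℤ) = ((n + 3 - 1 : ℕ) : ℤ) + 1 := by omega
          rw [e]; exact this
        · have hsum : IsWeightedHomogeneous w
              (∑ k ∈ Finset.Icc 1 (n+3-1), C ((n+3).choose k : ℚ) * P (k - 1) * P (n+3 - k - 1))
              ((n : ℤ) + 1) := by
            apply IsWeightedHomogeneous.sum
            intro k hk
            simp only [Finset.mem_Icc] at hk
            have e1 := ih (k-1) (by omega)
            have e2 := ih (n+3-k-1) (by omega)
            have := ((isWeightedHomogeneous_C w ((n+3).choose k : ℚ)).mul e1).mul e2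
            convert this using 1
            push_cast [Nat.cast_sub (by omega : 1 ≤ k)]
            have : ((n+3-k-1 : ℕ) : ℤ) = (n:ℤ)+3-k-1 := by omega
            rw [this]; ring
          have := ((isWeightedHomogeneous_C w (1/2 : ℚ)).mul h2).mul hsum
          convert this using 1
          push_cast
          ring
  intro d hd
  have := key n (MvPolynomial.mem_support_iff.mp hd)
  rw [weight_apply] at this
  have hcast : ((d.sum fun i e => i * e : ℕ) : ℤ) = d.sum fun i e => e • (i:ℤ) := by
    rw [Finsupp.sum, Finsupp.sum, Nat.cast_sum]
    apply Finset.sum_congr rfl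
    intro i _
    push_cast
    ring
  omega
end

section
/- For every n ≥ 0, the polynomial P_n satisfies the Euler-type identity Σ_{k=1}^{n} k x_k ∂P_n/∂x_k = n P_n. -/
open MvPolynomial

private lemma weight_single_one' (m : ℕ) :
    Finsupp.weight (id : ℕ → ℕ) (Finsupp.single m 1) = m := by
  simp [Finsupp.weight_apply, Finsupp.sum_single_index]

private lemma isWH_sub {P Q : MvPolynomial ℕ ℚ} {n : ℕ}
    (hP : IsWeightedHomogeneous id P n) (hQ : IsWeightedHomogeneous id Q n) :
    IsWeightedHomogeneous id (P - Q) n := by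
  rw [← mem_weightedHomogeneousSubmodule] at *
  exact Submodule.sub_mem _ hP hQ

private lemma isWH_pderiv {P : MvPolynomial ℕ ℚ} {n : ℕ}
    (h : IsWeightedHomogeneous id P n) (m : ℕ) :
    IsWeightedHomogeneous id (pderiv m P) (n - m) := by
  have hrw : pderiv m P
      = ∑ v ∈ P.support, monomial (v - Finsupp.single m 1) (coeff v P * v m) := by
    conv_lhs => rw [P.as_sum]
    rw [map_sum]
    exact Finset.sum_congr rfl fun v _ => pderiv_monomial
  rw [hrw]
  apply IsWeightedHomogeneous.sum
  intro v hv
  by_cases h0 : v m = 0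
  · rw [h0]
    simp only [Nat.cast_zero, mul_zero, map_zero]
    exact isWeightedHomogeneous_zero _ _ _
  · apply isWeightedHomogeneous_monomial
    have hle : Finsupp.single m 1 ≤ v := by
      rw [Finsupp.single_le_iff]; omega
    have hadd : (v - Finsupp.single m 1) + Finsupp.single m 1 = v :=
      tsub_add_cancel_of_le hle
    have hw : Finsupp.weight (id : ℕ → ℕ) v = n := h (mem_support_iff.mp hv)
    have hw2 := congrArg (Finsupp.weight (id : ℕ → ℕ)) hadd
    rw [map_add, weight_single_one', hw] at hw2
    omega

private lemma isWH_Ederiv {P : MvPolynomial ℕ ℚ} {n : ℕ}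
    (h : IsWeightedHomogeneous id P n) :
    IsWeightedHomogeneous id (Ederiv P) (n + 1) := by
  unfold Ederiv
  apply IsWeightedHomogeneous.sum
  intro m hm
  have hmv : m ∈ P.vars := (Finset.mem_erase.mp hm).2
  have hmn : m ≤ n := by
    obtain ⟨d, hd, hmd⟩ := (mem_vars m).mp hmv
    have h1 : Finsupp.weight (id : ℕ → ℕ) d = n := h (mem_support_iff.mp hd)
    have h2 := Finsupp.le_weight_of_ne_zero (w := (id : ℕ → ℕ))
      (fun s => Nat.zero_le _) (Finsupp.mem_support_iff.mp hmd)
    simpa [h1] using h2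
  have hpd := isWH_pderiv h m
  have h1 : IsWeightedHomogeneous id (X (m + 1) * pderiv m P) ((m + 1) + (n - m)) :=
    (isWeightedHomogeneous_X _ _ _).mul hpd
  have h2 : IsWeightedHomogeneous id (X 1 * X m * pderiv m P) ((1 + m) + (n - m)) :=
    ((isWeightedHomogeneous_X _ _ _).mul (isWeightedHomogeneous_X _ _ _)).mul hpd
  have e1 : (m + 1) + (n - m) = n + 1 := by omega
  have e2 : (1 + m) + (n - m) = n + 1 := by omega
  rw [sub_mul]
  exact isWH_sub (e1 ▸ h1) (e2 ▸ h2)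

private lemma euler_of_isWH {Q : MvPolynomial ℕ ℚ} {n : ℕ}
    (h : IsWeightedHomogeneous id Q n) :
    ∑ k ∈ Finset.Icc 1 n, C (k : ℚ) * X k * pderiv k Q = C (n : ℚ) * Q := by
  have step : ∀ k : ℕ, C (k : ℚ) * X k * pderiv k Q
      = ∑ v ∈ Q.support, monomial v (((k * v k : ℕ) : ℚ) * coeff v Q) := by
    intro k
    conv_lhs => rw [Q.as_sum]
    rw [map_sum, Finset.mul_sum]
    apply Finset.sum_congr rfl
    intro v hv
    rw [pderiv_monomial]
    by_cases h0 : v k = 0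
    · simp [h0]
    · have hle : Finsupp.single k 1 ≤ v := by
        rw [Finsupp.single_le_iff]; omega
      have hadd : Finsupp.single k 1 + (v - Finsupp.single k 1) = v := by
        rw [add_comm]; exact tsub_add_cancel_of_le hle
      rw [mul_assoc, ← pow_one (X k), ← monomial_single_add, hadd, C_mul_monomial]
      congr 1
      push_cast
      ring
  rw [Finset.sum_congr rfl fun k _ => step k, Finset.sum_comm]
  conv_rhs => rw [Q.as_sum, Finset.mul_sum]
  apply Finset.sum_congr rfl
  intro v hv
  have hw : Finsupp.weight (id : ℕ → ℕ) v = n := h (mem_support_iff.mp hv)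
  have hsup : v.support ⊆ insert 0 (Finset.Icc 1 n) := by
    intro i hi
    have hvi := Finsupp.mem_support_iff.mp hi
    have hle := Finsupp.le_weight_of_ne_zero (w := (id : ℕ → ℕ))
      (fun s => Nat.zero_le _) hvi
    rw [hw] at hle
    simp only [Finset.mem_insert, Finset.mem_Icc]
    rcases Nat.eq_zero_or_pos i with h' | h'
    · exact Or.inl h'
    · exact Or.inr ⟨h', hle⟩
  have hnat : ∑ k ∈ Finset.Icc 1 n, k * v k = n := by
    have h1 : ∑ k ∈ insert 0 (Finset.Icc 1 n), k * v k
        = ∑ k ∈ Finset.Icc 1 n, k * v k := by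
      rw [Finset.sum_insert (by simp)]
      simp
    rw [← h1, ← Finset.sum_subset hsup (fun x _ hx => by
      simp [Finsupp.notMem_support_iff.mp hx])]
    rw [Finsupp.weight_apply, Finsupp.sum] at hw
    rw [← hw]
    exact Finset.sum_congr rfl fun i _ => by simp [mul_comm]
  rw [← map_sum (monomial v), ← Finset.sum_mul, C_mul_monomial]
  congr 2
  rw [← Nat.cast_sum, hnat]

/-- Each polynomial `P_n` (defined by `P_0 = 1`, `P_1 = 0`, `P_2 = x_2 - (3/2)x_1²` and
`P_n = 𝓔P_{n-1} + (1/2) P_2 ∑_{k=1}^{n-1} C(n,k) P_{k-1} P_{n-k-1}` for `n ≥ 3`)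
satisfies the Euler-type identity `∑_{k=1}^{n} k x_k ∂P_n/∂x_k = n P_n`. -/
theorem tamP_euler (P : ℕ → MvPolynomial ℕ ℚ)
    (hP0 : P 0 = 1) (hP1 : P 1 = 0)
    (hP2 : P 2 = X 2 - C (3 / 2 : ℚ) * X 1 ^ 2)
    (hPrec : ∀ n, 3 ≤ n → P n = Ederiv (P (n - 1)) +
      C (1 / 2 : ℚ) * P 2 *
        ∑ k ∈ Finset.Icc 1 (n - 1), C (n.choose k : ℚ) * P (k - 1) * P (n - k - 1))
    (n : ℕ) :
    ∑ k ∈ Finset.Icc 1 n, C (k : ℚ) * X k * pderiv k (P n) = C (n : ℚ) * P n := by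
  have key : ∀ n, IsWeightedHomogeneous id (P n) n := by
    intro n
    induction n using Nat.strong_induction_on with
    | _ n ih =>
      match n, ih with
      | 0, _ => rw [hP0]; exact isWeightedHomogeneous_one _ _
      | 1, _ => rw [hP1]; exact isWeightedHomogeneous_zero _ _ _
      | 2, _ =>
        rw [hP2]
        apply isWH_sub
        · exact isWeightedHomogeneous_X _ _ _
        · have : IsWeightedHomogeneous id (C (3 / 2 : ℚ) * (X 1 * X 1) : MvPolynomial ℕ ℚ)
              (0 + (1 + 1)) :=
            (isWeightedHomogeneous_C _ _).mul
              ((isWeightedHomogeneous_X _ _ _).mul (isWeightedHomogeneous_X _ _ _))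
          rw [← mul_assoc, mul_assoc, ← sq] at this
          exact this
      | (k + 3), ih =>
        rw [hPrec (k + 3) (by omega)]
        have hE : IsWeightedHomogeneous id (Ederiv (P (k + 3 - 1))) (k + 3) :=
          isWH_Ederiv (ih (k + 2) (by omega))
        have hS : IsWeightedHomogeneous id
            (∑ j ∈ Finset.Icc 1 (k + 3 - 1),
              C ((k + 3).choose j : ℚ) * P (j - 1) * P (k + 3 - j - 1)) (k + 1) := by
          apply IsWeightedHomogeneous.sum
          intro j hj
          simp only [Finset.mem_Icc] at hj
          have h1 := ih (j - 1) (by omega)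
          have h2 := ih (k + 3 - j - 1) (by omega)
          have h3 := ((isWeightedHomogeneous_C (R := ℚ) id (((k + 3).choose j : ℚ))).mul h1).mul h2
          have e : 0 + (j - 1) + (k + 3 - j - 1) = k + 1 := by omega
          rwa [e] at h3
        have hM : IsWeightedHomogeneous id
            (C (1 / 2 : ℚ) * P 2 *
              ∑ j ∈ Finset.Icc 1 (k + 3 - 1),
                C ((k + 3).choose j : ℚ) * P (j - 1) * P (k + 3 - j - 1))
            (0 + 2 + (k + 1)) :=
          ((isWeightedHomogeneous_C _ _).mul (ih 2 (by omega))).mul hS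
        have e2 : 0 + 2 + (k + 1) = k + 3 := by omega
        rw [e2] at hM
        exact hE.add hM
  exact euler_of_isWH (key n)
end

section
/- Let f be holomorphic near z ∈ ℂ with f′(z) ≠ 0, and let M(ζ) = (aζ + b)/(cζ + d) be a Möbius transformation with ad − bc ≠ 0 such that c·f(w) + d ≠ 0 for w near z. Then for every n ≥ 2, the Aharonov invariants satisfy ψ_n[M∘f](z) = ψ_n[f](z). -/
/-!
With `M ζ = (a ζ + b) / (c ζ + d)` one has
`M X - M Y = (a d - b c) (X - Y) / ((c X + d) (c Y + d))` and
`(M ∘ f)'(z) = (a d - b c) f'(z) / (c f(z) + d)²`, hence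
`(M ∘ f)'(z) / (M (f (z + w)) - M (f z)) = f'(z) / (f (z + w) - f z) + c f'(z) / (c f(z) + d)`.
The two generating series of the invariants thus differ by a constant on a punctured disc, and
uniqueness of power series coefficients gives `ψ_n[M ∘ f](z) = ψ_n[f](z)` for `n ≥ 2`.
-/

open Filter Topology FormalMultilinearSeries

theorem eventually_nhdsNE_zero_of_forall_norm_lt {E : Type*} [SeminormedAddCommGroup E]
    {P : E → Prop} {r : ℝ} (hr : 0 < r) (h : ∀ w, w ≠ 0 → ‖w‖ < r → P w) :
    ∀ᶠ w in 𝓝[≠] (0 : E), P w :=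
  eventually_nhdsWithin_iff.mpr <| Filter.mem_of_superset (Metric.ball_mem_nhds 0 hr)
    fun w hw hw0 => h w hw0 (mem_ball_zero_iff.mp hw)

section

variable {𝕜 : Type*} [NontriviallyNormedField 𝕜]

theorem eq_zero_of_eventually_hasSum_pow_zero {e : ℕ → 𝕜}
    (h : ∀ᶠ w in 𝓝[≠] (0 : 𝕜), HasSum (fun m => e m * w ^ m) 0) : e = 0 := by
  classical
  let g : 𝕜 → 𝕜 := Function.update 0 0 (e 0)
  have hg : HasFPowerSeriesAt g (ofScalars 𝕜 e) 0 := by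
    rw [hasFPowerSeriesAt_iff]
    filter_upwards [eventually_nhdsWithin_iff.mp h] with w hw
    simp only [coeff_ofScalars, zero_add, smul_eq_mul]
    rcases eq_or_ne w 0 with rfl | hw0
    · simpa [g] using hasSum_single (f := fun m => (0 : 𝕜) ^ m * e m) 0 (by simp +contextual)
    · simpa [g, hw0, mul_comm] using hw hw0
  -- `g` is the sum of a power series, hence continuous at `0`, so `e 0 = g 0 = 0` as well.
  have hg0 : g =ᶠ[𝓝 0] 0 :=
    (hg.continuousAt.eventuallyEq_nhds_iff_eventuallyEq_nhdsNE continuousAt_const).mp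
      (eventually_nhdsWithin_of_forall fun w (hw : w ≠ 0) => Function.update_of_ne hw _ _)
  exact (ofScalars_series_eq_zero 𝕜).mp (hg.eq_zero_of_eventually hg0)

theorem coeff_succ_eq_zero_of_eventually_hasSum_pow_const {e : ℕ → 𝕜} {s : 𝕜}
    (h : ∀ᶠ w in 𝓝[≠] (0 : 𝕜), HasSum (fun m => e m * w ^ m) s) (m : ℕ) : e (m + 1) = 0 := by
  have h' : ∀ᶠ w in 𝓝[≠] (0 : 𝕜), HasSum (fun m => (e m - if m = 0 then s else 0) * w ^ m) 0 := by
    filter_upwards [h] with w hw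
    simpa using (hw.sub (hasSum_ite_eq 0 s)).congr_fun fun m => by split_ifs with hm <;> simp [hm]
  simpa using congrFun (eq_zero_of_eventually_hasSum_pow_zero h') (m + 1)

theorem HasDerivAt.moebius_comp {a b c d : 𝕜} {f : 𝕜 → 𝕜} {f' x : 𝕜} (hf : HasDerivAt f f' x)
    (hx : c * f x + d ≠ 0) :
    HasDerivAt (fun u => (a * f u + b) / (c * f u + d))
      ((a * d - b * c) * f' / (c * f x + d) ^ 2) x := by
  refine (((hf.const_mul a).add_const b).fun_div ((hf.const_mul c).add_const d) hx).congr_deriv ?_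
  ring

end

theorem moebius_deriv_div_sub {K : Type*} [Field K] {a b c d : K} (habcd : a * d - b * c ≠ 0)
    {x y : K} (hx : c * x + d ≠ 0) (hy : c * y + d ≠ 0) (hxy : x ≠ y) (D : K) :
    (a * d - b * c) * D / (c * y + d) ^ 2 / ((a * x + b) / (c * x + d) - (a * y + b) / (c * y + d))
      = D / (x - y) + c * D / (c * y + d) := by
  have hdiff : (a * x + b) / (c * x + d) - (a * y + b) / (c * y + d)
      = (a * d - b * c) * (x - y) / ((c * x + d) * (c * y + d)) := by
    rw [div_sub_div _ _ hx hy]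
    ring
  rw [hdiff]
  field_simp
  ring

theorem aharonov_moebius_invariant_general (f : ℂ → ℂ) (z : ℂ)
    (hf' : deriv f z ≠ 0)
    (a b c d : ℂ) (habcd : a * d - b * c ≠ 0)
    (hM : ∀ᶠ w in nhds z, c * f w + d ≠ 0)
    (ψ ψM : ℕ → ℂ) (r₁ r₂ : ℝ) (hr₁ : 0 < r₁) (hr₂ : 0 < r₂)
    (hψ : ∀ w : ℂ, w ≠ 0 → ‖w‖ < r₁ →
      HasSum (fun m : ℕ => ψ (m + 1) * w ^ m)
        (1 / w - deriv f z / (f (z + w) - f z)))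
    (hψM : ∀ w : ℂ, w ≠ 0 → ‖w‖ < r₂ →
      HasSum (fun m : ℕ => ψM (m + 1) * w ^ m)
        (1 / w - deriv (fun u => (a * f u + b) / (c * f u + d)) z /
          ((a * f (z + w) + b) / (c * f (z + w) + d) - (a * f z + b) / (c * f z + d))))
    (n : ℕ) (hn : 2 ≤ n) :
    ψM n = ψ n := by
  have hfz : HasDerivAt f (deriv f z) z := (differentiableAt_of_deriv_ne_zero hf').hasDerivAt
  have hdz : c * f z + d ≠ 0 := hM.self_of_nhds
  have hshift : Tendsto (z + ·) (𝓝 0) (𝓝 z) := (continuous_const_add z).tendsto' 0 z (add_zero z)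
  have hne : ∀ᶠ w in 𝓝[≠] (0 : ℂ), f (z + w) ≠ f z :=
    (HasDerivAt.comp_const_add z 0 (by rwa [add_zero])).eventually_ne hf'
  have hdiff : ∀ᶠ w in 𝓝[≠] (0 : ℂ),
      HasSum (fun m => (ψM (m + 1) - ψ (m + 1)) * w ^ m) (-(c * deriv f z / (c * f z + d))) := by
    filter_upwards [eventually_nhdsNE_zero_of_forall_norm_lt hr₁ hψ,
      eventually_nhdsNE_zero_of_forall_norm_lt hr₂ hψM, hne,
      nhdsWithin_le_nhds (hshift.eventually hM)] with w hsum hsumM hfw hdw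
    rw [(hfz.moebius_comp hdz).deriv, moebius_deriv_div_sub habcd hdw hdz hfw] at hsumM
    simpa [sub_mul] using hsumM.sub hsum
  obtain ⟨m, rfl⟩ := Nat.exists_eq_add_of_le' hn
  exact sub_eq_zero.mp (coeff_succ_eq_zero_of_eventually_hasSum_pow_const hdiff m)

/-- Möbius invariance of the Aharonov invariants `ψ_n[f]`, `n ≥ 2`.  The Aharonov
invariants of a function `F` with `F'(z) ≠ 0` are defined by the expansion
`F'(z)/(F(z+w) - F(z)) = 1/w - ∑_{m≥1} ψ_m[F](z) w^{m-1}` for small `w ≠ 0`. -/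
theorem aharonov_moebius_invariant (f : ℂ → ℂ) (z : ℂ)
    (hf : AnalyticAt ℂ f z) (hf' : deriv f z ≠ 0)
    (a b c d : ℂ) (habcd : a * d - b * c ≠ 0)
    (hM : ∀ᶠ w in nhds z, c * f w + d ≠ 0)
    (ψ ψM : ℕ → ℂ) (r₁ r₂ : ℝ) (hr₁ : 0 < r₁) (hr₂ : 0 < r₂)
    (hψ : ∀ w : ℂ, w ≠ 0 → ‖w‖ < r₁ →
      HasSum (fun m : ℕ => ψ (m + 1) * w ^ m)
        (1 / w - deriv f z / (f (z + w) - f z)))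
    (hψM : ∀ w : ℂ, w ≠ 0 → ‖w‖ < r₂ →
      HasSum (fun m : ℕ => ψM (m + 1) * w ^ m)
        (1 / w - deriv (fun u => (a * f u + b) / (c * f u + d)) z /
          ((a * f (z + w) + b) / (c * f (z + w) + d) - (a * f z + b) / (c * f z + d))))
    (n : ℕ) (hn : 2 ≤ n) :
    ψM n = ψ n :=
  aharonov_moebius_invariant_general f z hf' a b c d habcd hM ψ ψM r₁ r₂ hr₁ hr₂ hψ hψM n hn
end

section
/- Let f be holomorphic on a domain D ⊆ ℂ with f′ nonvanishing. Then for every n ≥ 3 and every z ∈ D, the Aharonov invariants satisfy the recursion (n+1)·ψ_n[f](z) = (ψ_{n−1}[f])′(z) + Σ_{k=2}^{n−2} ψ_k[f](z) ψ_{n−k}[f](z). -/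
/-!
Put `g(z, w) = f (z + w) - f z = w A_z(w)` and `S_z(w) = ∑_{k ≥ 1} ψ_k(z) w^k`, so that the
defining expansion says `A_z (1 - S_z) = f'(z)`; by uniqueness of Taylor coefficients this is an
identity of formal power series in `w`. Differentiating it coefficientwise in `z`, and using
`∂_z g = ∂_w g - f'(z)`, i.e. `X ∂_z A = d/dX (X A) - f'(z)`, leaves a polynomial identity in
the ring of formal power series which after cancelling `f'(z)` reads
`S + X S' - S² - X ∂_z S = 2 ψ_1 X (1 - S)`. Its coefficient of `X^n` is the recursion.
-/

open PowerSeries Finset Filter Topology Nat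

namespace PowerSeries

section HasSumAt

def HasSumAt (p : ℂ⟦X⟧) (w a : ℂ) : Prop := HasSum (fun k => coeff k p * w ^ k) a

variable {p q : ℂ⟦X⟧} {w a b : ℂ}

theorem hasSumAt_C (a w : ℂ) : HasSumAt (C a) w a := by
  have : (fun k => coeff k (C a) * w ^ k) = fun k => if k = 0 then a else 0 := by
    funext k; rcases k with _ | k <;> simp [coeff_C]
  rw [HasSumAt, this]
  exact hasSum_ite_eq 0 a

theorem HasSumAt.sub (hp : HasSumAt p w a) (hq : HasSumAt q w b) : HasSumAt (p - q) w (a - b) := by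
  simpa only [HasSumAt, map_sub, sub_mul] using HasSum.sub hp hq

theorem HasSumAt.X_mul (hp : HasSumAt p w a) : HasSumAt (X * p) w (w * a) := by
  rw [HasSumAt, ← hasSum_nat_add_iff' 1]
  simp only [range_one, sum_singleton, coeff_zero_X_mul, zero_mul, sub_zero, coeff_succ_X_mul]
  exact (hp.mul_left w).congr_fun fun k => by ring

theorem HasSumAt.mul (hp : HasSumAt p w a) (hq : HasSumAt q w b) : HasSumAt (p * q) w (a * b) := by
  have hp' := summable_norm_iff.mpr hp.summable
  have hq' := summable_norm_iff.mpr hq.summable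
  have hterm : ∀ k, coeff k (p * q) * w ^ k =
      ∑ ij ∈ antidiagonal k, coeff ij.1 p * w ^ ij.1 * (coeff ij.2 q * w ^ ij.2) := by
    intro k
    rw [coeff_mul, sum_mul]
    refine sum_congr rfl fun ij hij => ?_
    rw [← mem_antidiagonal.mp hij, pow_add]
    ring
  rw [HasSumAt, funext hterm, ← hp.tsum_eq, ← hq.tsum_eq,
    tsum_mul_tsum_eq_tsum_sum_antidiagonal_of_summable_norm hp' hq']
  exact (summable_norm_sum_mul_antidiagonal_of_summable_norm hp' hq').of_norm.hasSum

theorem eq_zero_of_hasSumAt_zero {r : ℝ} (hr : 0 < r)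
    (h : ∀ w : ℂ, w ≠ 0 → ‖w‖ < r → HasSumAt p w 0) : p = 0 := by
  -- Multiplying by `X` makes the series sum to `0` at `w = 0` as well.
  have hXp : ∀ w : ℂ, ‖w‖ < r → HasSumAt (X * p) w 0 := by
    intro w hw
    rcases eq_or_ne w 0 with rfl | hw0
    · rw [HasSumAt]
      convert hasSum_zero with k
      rcases k with _ | k <;> simp
    · simpa using (h w hw0 hw).X_mul
  set c : ℕ → ℂ := fun k => coeff k (X * p)
  obtain ⟨ρ, hρ0, hρ⟩ := exists_between hr
  lift ρ to NNReal using hρ0.le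
  have hrad : (ρ : ENNReal) ≤ (FormalMultilinearSeries.ofScalars ℂ c).radius := by
    refine FormalMultilinearSeries.le_radius_of_summable _ ?_
    have hs := summable_norm_iff.mpr (hXp ρ (by simpa using hρ)).summable
    simpa [FormalMultilinearSeries.ofScalars_norm] using hs
  have hzero :
      HasFPowerSeriesOnBall (0 : ℂ → ℂ) (FormalMultilinearSeries.ofScalars ℂ c) 0 ρ := by
    refine ⟨hrad, by simpa using hρ0, fun {y} hy => ?_⟩
    simp only [FormalMultilinearSeries.ofScalars_apply_eq, smul_eq_mul, Pi.zero_apply]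
    simpa [HasSumAt, c] using hXp y ((by simpa using hy : ‖y‖ < ρ).trans hρ)
  have hc : c = 0 :=
    (FormalMultilinearSeries.ofScalars_series_eq_zero _).mp hzero.hasFPowerSeriesAt.eq_zero
  ext k
  simpa [c, coeff_succ_X_mul] using congrFun hc (k + 1)

end HasSumAt

section CoeffDeriv

variable {𝕜 : Type*} [NontriviallyNormedField 𝕜] {F G H : 𝕜 → 𝕜⟦X⟧} {z : 𝕜}

noncomputable def coeffDeriv (F : 𝕜 → 𝕜⟦X⟧) (z : 𝕜) : 𝕜⟦X⟧ :=
  mk fun n => deriv (fun ξ => coeff n (F ξ)) z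

theorem differentiableAt_coeff_mul (hF : ∀ n, DifferentiableAt 𝕜 (fun ξ => coeff n (F ξ)) z)
    (hG : ∀ n, DifferentiableAt 𝕜 (fun ξ => coeff n (G ξ)) z) (n : ℕ) :
    DifferentiableAt 𝕜 (fun ξ => coeff n (F ξ * G ξ)) z := by
  simp only [coeff_mul]
  exact DifferentiableAt.fun_sum fun ij _ => (hF ij.1).mul (hG ij.2)

theorem coeffDeriv_mul (hF : ∀ n, DifferentiableAt 𝕜 (fun ξ => coeff n (F ξ)) z)
    (hG : ∀ n, DifferentiableAt 𝕜 (fun ξ => coeff n (G ξ)) z) :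
    coeffDeriv (fun ξ => F ξ * G ξ) z = coeffDeriv F z * G z + F z * coeffDeriv G z := by
  ext n
  simp only [coeffDeriv, coeff_mk, map_add, coeff_mul, ← sum_add_distrib]
  rw [deriv_fun_sum fun ij _ => (hF ij.1).mul (hG ij.2)]
  exact sum_congr rfl fun ij _ => deriv_fun_mul (hF ij.1) (hG ij.2)

theorem differentiableAt_coeff_C_constantCoeff
    (hF : ∀ n, DifferentiableAt 𝕜 (fun ξ => coeff n (F ξ)) z) (n : ℕ) :
    DifferentiableAt 𝕜 (fun ξ => coeff n (C (constantCoeff (F ξ)))) z := by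
  rcases n with _ | n
  · simpa [coeff_C] using hF 0
  · simp

theorem coeffDeriv_C_constantCoeff :
    coeffDeriv (fun ξ => C (constantCoeff (F ξ))) z = C (constantCoeff (coeffDeriv F z)) := by
  ext n
  rcases n with _ | n <;> simp [coeffDeriv, coeff_C]

theorem coeffDeriv_const_sub (c : 𝕜⟦X⟧) :
    coeffDeriv (fun ξ => c - F ξ) z = -coeffDeriv F z := by
  ext n
  simp [coeffDeriv, deriv_const_sub]

theorem _root_.Filter.EventuallyEq.coeffDeriv_eq (h : F =ᶠ[𝓝 z] G) :
    coeffDeriv F z = coeffDeriv G z := by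
  ext n
  simp only [coeffDeriv, coeff_mk]
  exact (h.fun_comp (coeff n)).deriv_eq

theorem differentiableAt_coeff_inv (hF : ∀ n, DifferentiableAt 𝕜 (fun ξ => coeff n (F ξ)) z)
    (hF0 : constantCoeff (F z) ≠ 0) (n : ℕ) :
    DifferentiableAt 𝕜 (fun ξ => coeff n (F ξ)⁻¹) z := by
  have hinv : DifferentiableAt 𝕜 (fun ξ => (constantCoeff (F ξ))⁻¹) z := by
    simpa only [coeff_zero_eq_constantCoeff_apply] using
      (hF 0).fun_inv (by rwa [coeff_zero_eq_constantCoeff_apply])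
  induction n using Nat.strong_induction_on with
  | _ n ih =>
    simp only [coeff_inv n]
    rcases eq_or_ne n 0 with rfl | hn
    · simpa using hinv
    simp only [hn, if_false]
    refine hinv.neg.mul (DifferentiableAt.fun_sum fun ij hij => ?_)
    by_cases hlt : ij.2 < n
    · simp only [hlt, if_true]; exact (hF ij.1).mul (ih ij.2 hlt)
    · simp only [hlt, if_false]; exact differentiableAt_const 0

theorem differentiableAt_coeff_of_mul_eq
    (hF : ∀ n, DifferentiableAt 𝕜 (fun ξ => coeff n (F ξ)) z)
    (hH : ∀ n, DifferentiableAt 𝕜 (fun ξ => coeff n (H ξ)) z)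
    (hF0 : constantCoeff (F z) ≠ 0) (hFG : ∀ᶠ ξ in 𝓝 z, F ξ * G ξ = H ξ) (n : ℕ) :
    DifferentiableAt 𝕜 (fun ξ => coeff n (G ξ)) z := by
  have hF0' : ∀ᶠ ξ in 𝓝 z, constantCoeff (F ξ) ≠ 0 := by
    simp only [← coeff_zero_eq_constantCoeff_apply] at hF0 ⊢
    exact (hF 0).continuousAt.eventually_ne hF0
  refine (differentiableAt_coeff_mul (differentiableAt_coeff_inv hF hF0) hH n)
    |>.congr_of_eventuallyEq ?_
  filter_upwards [hFG, hF0'] with ξ hξ hξ0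
  rw [← hξ, ← mul_assoc, PowerSeries.inv_mul_cancel _ hξ0, one_mul]

theorem coeffDeriv_of_mul_one_sub_eq
    (hF : ∀ n, DifferentiableAt 𝕜 (fun ξ => coeff n (F ξ)) z)
    (hF0 : constantCoeff (F z) ≠ 0)
    (hFG : (fun ξ => F ξ * (1 - G ξ)) =ᶠ[𝓝 z] fun ξ => C (constantCoeff (F ξ))) :
    coeffDeriv F z * (1 - G z) - F z * coeffDeriv G z = C (constantCoeff (coeffDeriv F z)) := by
  have hG := differentiableAt_coeff_of_mul_eq hF (differentiableAt_coeff_C_constantCoeff hF) hF0 hFG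
  have h := hFG.coeffDeriv_eq
  rwa [coeffDeriv_mul hF hG, coeffDeriv_const_sub, coeffDeriv_C_constantCoeff, mul_neg,
    ← sub_eq_add_neg] at h

end CoeffDeriv

section Identity

theorem coeff_sq_of_constantCoeff_eq_zero {R : Type*} [CommRing R] {S : R⟦X⟧}
    (hS0 : constantCoeff S = 0) {n : ℕ} (hn : 3 ≤ n) :
    coeff n (S ^ 2) =
      2 * coeff 1 S * coeff (n - 1) S + ∑ k ∈ Icc 2 (n - 2), coeff k S * coeff (n - k) S := by
  have hS0' : coeff 0 S = 0 := by rwa [coeff_zero_eq_constantCoeff_apply]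
  rw [sq, coeff_mul, Nat.sum_antidiagonal_eq_sum_range_succ_mk]
  have hsplit : range (n + 1) = {0, 1, n - 1, n} ∪ Icc 2 (n - 2) := by
    ext k; simp only [mem_range, mem_union, mem_insert, mem_singleton, mem_Icc]; omega
  rw [hsplit, sum_union (by simp only [disjoint_left, mem_insert, mem_singleton, mem_Icc]; omega)]
  rw [sum_insert (by simp; omega), sum_insert (by simp; omega), sum_insert (by simp; omega),
    sum_singleton, Nat.sub_zero, Nat.sub_self, show n - (n - 1) = 1 by omega, hS0']
  ring

variable {K : Type*} [Field K] {A Az S Sz : K⟦X⟧}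

theorem aharonov_identity_mul
    (hAS : A * (1 - S) = C (constantCoeff A))
    (hderiv : Az * (1 - S) - A * Sz = C (constantCoeff Az))
    (hAz : X * Az = d⁄dX K (X * A) - C (constantCoeff A)) :
    C (constantCoeff A) * (S + X * d⁄dX K S - S ^ 2 - X * Sz) =
      C (constantCoeff Az) * X * (1 - S) := by
  have hXA : d⁄dX K (X * A) = A + X * d⁄dX K A := by
    rw [Derivation.leibniz, derivative_X]; simp only [smul_eq_mul]; ring
  have hdAS : d⁄dX K A * (1 - S) - A * d⁄dX K S = 0 := by
    have := congrArg (d⁄dX K) hAS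
    rw [Derivation.leibniz, derivative_C, map_sub, derivative_one] at this
    simp only [smul_eq_mul] at this
    linear_combination this
  rw [hXA] at hAz
  linear_combination (X * (1 - S)) * hderiv - (1 - S) ^ 2 * hAz
    - (1 - S + X * d⁄dX K S - X * Sz) * hAS - X * (1 - S) * hdAS

theorem aharonov_identity (hA0 : constantCoeff A ≠ 0) (hS0 : constantCoeff S = 0)
    (hAS : A * (1 - S) = C (constantCoeff A))
    (hderiv : Az * (1 - S) - A * Sz = C (constantCoeff Az))
    (hAz : X * Az = d⁄dX K (X * A) - C (constantCoeff A)) :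
    S + X * d⁄dX K S - S ^ 2 - X * Sz = C (2 * coeff 1 S) * X * (1 - S) := by
  have hAz0 : constantCoeff Az = 2 * constantCoeff A * coeff 1 S := by
    have h1 := congrArg (coeff 1) hAz
    have h2 := congrArg (coeff 1) hAS
    simp only [coeff_mul, sum_antidiagonal_succ, coeff_zero_X, zero_add, zero_mul,
      HasAntidiagonal.antidiagonal_zero, sum_singleton, coeff_one_X, coeff_zero_eq_constantCoeff,
      one_mul, Derivation.leibniz, smul_eq_mul, derivative_X, mul_one, map_sub, map_add,
      coeff_derivative, cast_one, cast_zero, coeff_succ_C, sub_zero, coeff_one, one_ne_zero,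
      ↓reduceIte, zero_sub, mul_neg, hS0] at h1 h2
    linear_combination h1 + 2 * h2
  refine mul_left_cancel₀ ((map_ne_zero_iff _ C_injective).mpr hA0) ?_
  rw [aharonov_identity_mul hAS hderiv hAz, hAz0]
  simp only [map_mul, map_ofNat]
  ring

theorem aharonov_coeff_recursion (hA0 : constantCoeff A ≠ 0) (hS0 : constantCoeff S = 0)
    (hAS : A * (1 - S) = C (constantCoeff A))
    (hderiv : Az * (1 - S) - A * Sz = C (constantCoeff Az))
    (hAz : X * Az = d⁄dX K (X * A) - C (constantCoeff A)) {n : ℕ} (hn : 3 ≤ n) :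
    (n + 1) * coeff n S =
      coeff (n - 1) Sz + ∑ k ∈ Icc 2 (n - 2), coeff k S * coeff (n - k) S := by
  have h := congrArg (coeff n) (aharonov_identity hA0 hS0 hAS hderiv hAz)
  obtain ⟨m, rfl⟩ : ∃ m, n = m + 3 := ⟨n - 3, by omega⟩
  simp only [map_sub, map_add, coeff_sq_of_constantCoeff_eq_zero hS0 hn, mul_assoc, coeff_C_mul,
    coeff_succ_X_mul, coeff_derivative, coeff_one] at h
  rw [show m + 3 - 1 = m + 2 by omega] at h ⊢
  rw [if_neg (by omega)] at h
  push_cast at h ⊢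
  linear_combination h

end Identity

end PowerSeries

open PowerSeries

section Aharonov

variable {f : ℂ → ℂ} {z : ℂ}

noncomputable def dslopeSeries (f : ℂ → ℂ) (z : ℂ) : ℂ⟦X⟧ :=
  mk fun j => iteratedDeriv (j + 1) f z / (j + 1)!

noncomputable def aharonovSeries (ψ : ℕ → ℂ → ℂ) (z : ℂ) : ℂ⟦X⟧ :=
  mk fun m => ψ (m + 1) z

theorem coeff_X_mul_aharonovSeries (ψ : ℕ → ℂ → ℂ) (z : ℂ) {k : ℕ} (hk : k ≠ 0) :
    coeff k (X * aharonovSeries ψ z) = ψ k z := by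
  obtain ⟨j, rfl⟩ := Nat.exists_eq_succ_of_ne_zero hk
  simp [aharonovSeries, coeff_succ_X_mul]

@[simp]
theorem constantCoeff_dslopeSeries : constantCoeff (dslopeSeries f z) = deriv f z := by
  simp [dslopeSeries, ← coeff_zero_eq_constantCoeff_apply]

theorem hasSumAt_dslopeSeries {r : ℝ} (hf : DifferentiableOn ℂ f (Metric.ball z r)) {w : ℂ}
    (hw0 : w ≠ 0) (hw : ‖w‖ < r) : HasSumAt (dslopeSeries f z) w ((f (z + w) - f z) / w) := by
  have h := Complex.hasSum_taylorSeries_on_ball hf (z := z + w) (by simpa using hw)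
  rw [← hasSum_nat_add_iff' 1] at h
  simp only [add_sub_cancel_left, smul_eq_mul, range_one, sum_singleton, factorial_zero, cast_one,
    inv_one, pow_zero, iteratedDeriv_zero, one_mul] at h
  refine (h.div_const w).congr_fun fun j => ?_
  simp only [dslopeSeries, coeff_mk]
  field_simp
  ring

theorem dslopeSeries_mul_one_sub_X_mul_eq {P : ℂ⟦X⟧} {ρ r : ℝ} (hρ : 0 < ρ)
    (hf : DifferentiableOn ℂ f (Metric.ball z ρ)) (hf' : deriv f z ≠ 0) (hr : 0 < r)
    (hP : ∀ w : ℂ, w ≠ 0 → ‖w‖ < r →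
      HasSumAt P w (1 / w - deriv f z / (f (z + w) - f z))) :
    dslopeSeries f z * (1 - X * P) = C (deriv f z) := by
  have hfz : HasDerivAt f (deriv f z) z :=
    (hf.differentiableAt (Metric.ball_mem_nhds z hρ)).hasDerivAt
  obtain ⟨ε, hε, hne⟩ :
      ∃ ε > 0, ∀ w : ℂ, w ≠ 0 → ‖w‖ < ε → f (z + w) ≠ f z := by
    have := hfz.eventually_ne (c := f z) hf'
    rw [eventually_nhdsWithin_iff, Metric.eventually_nhds_iff] at this
    obtain ⟨ε, hε, h⟩ := this
    exact ⟨ε, hε, fun w hw0 hw => h (by simpa [dist_eq_norm] using hw) (by simpa using hw0)⟩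
  rw [← sub_eq_zero]
  refine eq_zero_of_hasSumAt_zero (lt_min hρ (lt_min hr hε)) fun w hw0 hw => ?_
  simp only [lt_min_iff] at hw
  have hF : f (z + w) - f z ≠ 0 := sub_ne_zero.mpr (hne w hw0 hw.2.2)
  have h := ((hasSumAt_dslopeSeries hf hw0 hw.1).mul
    ((hasSumAt_C 1 w).sub (hP w hw0 hw.2.1).X_mul)).sub (hasSumAt_C (deriv f z) w)
  rw [map_one] at h
  convert h using 1
  field_simp
  ring

theorem differentiableAt_coeff_dslopeSeries {D : Set ℂ} (hD : IsOpen D)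
    (hf : DifferentiableOn ℂ f D) (hz : z ∈ D) (n : ℕ) :
    DifferentiableAt ℂ (fun ξ => coeff n (dslopeSeries f ξ)) z := by
  have := ((hf.analyticOnNhd hD).iterated_deriv (n + 1) z hz).differentiableAt
  rw [← iteratedDeriv_eq_iterate] at this
  simpa only [dslopeSeries, coeff_mk] using this.div_const _

/-- The formal version of `∂_z g = ∂_w g - f'(z)` for `g(z, w) = f (z + w) - f z`. -/
theorem X_mul_coeffDeriv_dslopeSeries (f : ℂ → ℂ) (z : ℂ) :
    X * coeffDeriv (dslopeSeries f) z =
      d⁄dX ℂ (X * dslopeSeries f z) - C (constantCoeff (dslopeSeries f z)) := by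
  ext k
  rcases k with _ | j
  · simp [dslopeSeries]
  · simp only [coeffDeriv, dslopeSeries, coeff_mk, coeff_derivative, coeff_succ_X_mul, map_sub,
      coeff_C, deriv_div_const, ← iteratedDeriv_succ, if_neg j.succ_ne_zero, sub_zero]
    have hj : (j : ℂ) + 1 + 1 ≠ 0 := by norm_cast
    rw [factorial_succ (j + 1)]
    push_cast
    field_simp

end Aharonov

/-- Aharonov's recursion formula `(n+1)ψ_n[f] = (ψ_{n-1}[f])' + ∑_{k=2}^{n-2} ψ_k[f] ψ_{n-k}[f]`,
where the Aharonov invariants `ψ_m[f]` are defined by the expansion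
`f'(z)/(f(z+w) - f(z)) = 1/w - ∑_{m≥1} ψ_m[f](z) w^{m-1}` for small `w ≠ 0`. -/
theorem aharonov_recursion (D : Set ℂ) (hD : IsOpen D) (f : ℂ → ℂ)
    (hf : DifferentiableOn ℂ f D) (hf' : ∀ z ∈ D, deriv f z ≠ 0)
    (ψ : ℕ → ℂ → ℂ)
    (hψ : ∀ z ∈ D, ∃ r : ℝ, 0 < r ∧ ∀ w : ℂ, w ≠ 0 → ‖w‖ < r →
      HasSum (fun m : ℕ => ψ (m + 1) z * w ^ m)
        (1 / w - deriv f z / (f (z + w) - f z)))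
    (n : ℕ) (hn : 3 ≤ n) (z : ℂ) (hz : z ∈ D) :
    ((n : ℂ) + 1) * ψ n z =
      deriv (ψ (n - 1)) z + ∑ k ∈ Finset.Icc 2 (n - 2), ψ k z * ψ (n - k) z := by
  have hrel : Set.EqOn (fun ξ => dslopeSeries f ξ * (1 - X * aharonovSeries ψ ξ))
      (fun ξ => C (constantCoeff (dslopeSeries f ξ))) D := by
    intro ξ hξ
    obtain ⟨r, hr, hψξ⟩ := hψ ξ hξ
    obtain ⟨ρ, hρ, hball⟩ := Metric.isOpen_iff.mp hD ξ hξ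
    simp only [constantCoeff_dslopeSeries]
    exact dslopeSeries_mul_one_sub_X_mul_eq hρ (hf.mono hball) (hf' ξ hξ) hr
      fun w hw0 hw => by simpa [HasSumAt, aharonovSeries] using hψξ w hw0 hw
  have hA0 : constantCoeff (dslopeSeries f z) ≠ 0 := by simpa using hf' z hz
  have hderiv := coeffDeriv_of_mul_one_sub_eq (differentiableAt_coeff_dslopeSeries hD hf hz) hA0
    (eventuallyEq_of_mem (hD.mem_nhds hz) hrel)
  have key := aharonov_coeff_recursion hA0 (by simp) (hrel hz) hderiv
    (X_mul_coeffDeriv_dslopeSeries f z) hn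
  simp only [coeffDeriv, coeff_mk, coeff_X_mul_aharonovSeries ψ _ (show n - 1 ≠ 0 by omega),
    coeff_X_mul_aharonovSeries ψ z (show n ≠ 0 by omega)] at key
  rw [key]
  congr 1
  refine sum_congr rfl fun k hk => ?_
  rw [mem_Icc] at hk
  rw [coeff_X_mul_aharonovSeries ψ z (by omega), coeff_X_mul_aharonovSeries ψ z (by omega)]
end
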